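/- arXiv:2108.11030 — 9 statements merged into one kernel-verified Lean document; each statement's English description precedes it below -/
import Mathlib

section
/- For every integer n ≥ 2 and every ε ∈ (0,1) there exists δ > 0 (depending only on n and ε) with the following property: there do not exist DER data f₁, …, f_{n+2} on the unit sphere S^{n−1} ⊆ ℝⁿ such that ⟨f₁, f_i⟩ < −ε for every i with 3 ≤ i ≤ n+2, ⟨f_i, f_j⟩ < δ for all i ≠ j, and sup_{x ∈ S^{n−1}} f₂(x) > ε. -/
open scoped InnerProductSpace

noncomputable section

/-- DER data on the unit sphere of `EuclideanSpace ℝ (Fin n)`: a finite family of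
nonempty compact subsets of the sphere together with nonnegative weights summing to at most 1. -/
structure DERData (n : ℕ) where
  m : ℕ
  w : Fin m → ℝ
  A : Fin m → Set (EuclideanSpace ℝ (Fin n))
  nonempty' : ∀ α, (A α).Nonempty
  compact' : ∀ α, IsCompact (A α)
  subset_sphere : ∀ α, A α ⊆ Metric.sphere (0 : EuclideanSpace ℝ (Fin n)) 1
  nonneg : ∀ α, 0 ≤ w α
  sum_le_one : ∑ α, w α ≤ 1

/-- The DER function of DER data: `f(x) = -∑ a_α cos d(A_α, x) = -∑ a_α sup_{a ∈ A_α} ⟪a, x⟫`. -/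
def DERData.toFun {n : ℕ} (f : DERData n) (x : EuclideanSpace ℝ (Fin n)) : ℝ :=
  -∑ α, f.w α * sSup ((fun a => ⟪a, x⟫_ℝ) '' f.A α)

/-- The scalar product of two DER data:
`⟨f,g⟩ = ∑_{α,β} a_α b_β cos d(A_α, B_β) = ∑_{α,β} a_α b_β sup_{a ∈ A_α, b ∈ B_β} ⟪a, b⟫`. -/
def DERData.sprod {n : ℕ} (f g : DERData n) : ℝ :=
  ∑ α, ∑ β, f.w α * g.w β * sSup (Set.image2 (fun a b => ⟪a, b⟫_ℝ) (f.A α) (g.A β))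

/-!
Pick a point `x` of the sphere with `f₂(x) > ε` and, in every set `A_α` of every `fᵢ`, a point
`p_α` nearest to `x`. The vectors `vᵢ = ∑ a_α p_α` satisfy `‖vᵢ‖ ≤ 1`, `⟪vᵢ, vⱼ⟫ ≤ ⟨fᵢ, fⱼ⟩` and
`‖v₂‖ ≥ -⟪v₂, x⟫ = f₂(x) > ε`, so it suffices to treat vectors, and by compactness of the space
of configurations it suffices to treat `δ = 0`: `n + 2` vectors of `ℝⁿ` with pairwise
non-positive inner products, `v₁` making an obtuse angle with `v₃, …, v_{n+2}`. The `n + 1`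
vectors `v₂, …, v_{n+2}` are linearly dependent, and when inner products are pairwise
non-positive the positive part of a linear relation is again a relation. Testing such a
nonnegative relation against `v₁` kills every coefficient except that of `v₂`, so `v₂ = 0`.
-/

section InnerNonpos

variable {E : Type*} [NormedAddCommGroup E] [InnerProductSpace ℝ E] {ι : Type*} [Fintype ι]

theorem sum_posPart_smul_eq_zero_of_pairwise_inner_nonpos {u : ι → E}
    (hu : Pairwise fun i j => ⟪u i, u j⟫_ℝ ≤ 0) {c : ι → ℝ} (hc : ∑ i, c i • u i = 0) :
    ∑ i, (c i)⁺ • u i = 0 := by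
  set z := ∑ i, (c i)⁺ • u i
  have hz : z = ∑ i, (c i)⁻ • u i := by
    rw [← sub_eq_zero, ← Finset.sum_sub_distrib, ← hc]
    simp only [← sub_smul, posPart_sub_negPart]
  -- the positive and negative parts of `c` have disjoint supports
  have hzz : ⟪z, ∑ i, (c i)⁻ • u i⟫_ℝ ≤ 0 := by
    rw [sum_inner]
    simp only [inner_sum, real_inner_smul_left, real_inner_smul_right]
    refine Finset.sum_nonpos fun i _ => Finset.sum_nonpos fun j _ => ?_
    rcases eq_or_ne i j with rfl | hij
    · rcases le_total 0 (c i) with h | h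
      · simp [negPart_eq_zero.2 h]
      · simp [posPart_eq_zero.2 h]
    · exact mul_nonpos_of_nonneg_of_nonpos (negPart_nonneg _)
        (mul_nonpos_of_nonneg_of_nonpos (posPart_nonneg _) (hu hij))
  rw [← hz] at hzz
  exact real_inner_self_nonpos.1 hzz

theorem exists_nonneg_relation_of_pairwise_inner_nonpos {u : ι → E}
    (hu : Pairwise fun i j => ⟪u i, u j⟫_ℝ ≤ 0) (hdep : ¬ LinearIndependent ℝ u) :
    ∃ d : ι → ℝ, (∀ i, 0 ≤ d i) ∧ (∃ i, d i ≠ 0) ∧ ∑ i, d i • u i = 0 := by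
  obtain ⟨c, hc, i, hci⟩ := Fintype.not_linearIndependent_iff.1 hdep
  rcases hci.lt_or_gt with hneg | hpos
  · refine ⟨fun i => (-c i)⁺, fun i => posPart_nonneg _, ⟨i, (posPart_pos (neg_pos.2 hneg)).ne'⟩,
      sum_posPart_smul_eq_zero_of_pairwise_inner_nonpos hu ?_⟩
    simp only [neg_smul, Finset.sum_neg_distrib, hc, neg_zero]
  · exact ⟨fun i => (c i)⁺, fun i => posPart_nonneg _, ⟨i, (posPart_pos hpos).ne'⟩,
      sum_posPart_smul_eq_zero_of_pairwise_inner_nonpos hu hc⟩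

theorem eq_zero_of_sum_smul_eq_zero_of_inner_neg {u : ι → E} {d : ι → ℝ} (hd : ∀ i, 0 ≤ d i)
    (hsum : ∑ i, d i • u i = 0) {y : E} (hy : ∀ i, ⟪u i, y⟫_ℝ ≤ 0) {i : ι}
    (hi : ⟪u i, y⟫_ℝ < 0) : d i = 0 := by
  have hterms : ∑ j, d j * ⟪u j, y⟫_ℝ = 0 := by
    simpa only [sum_inner, real_inner_smul_left, inner_zero_left] using congrArg (⟪·, y⟫_ℝ) hsum
  have hterm : d i * ⟪u i, y⟫_ℝ = 0 :=
    (Finset.sum_eq_zero_iff_of_nonpos fun j _ => mul_nonpos_of_nonneg_of_nonpos (hd j) (hy j)).1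
      hterms i (Finset.mem_univ i)
  exact (mul_eq_zero.1 hterm).resolve_right hi.ne

theorem eq_zero_of_not_linearIndependent_of_inner_nonpos {u : ι → E}
    (hu : Pairwise fun i j => ⟪u i, u j⟫_ℝ ≤ 0) (hdep : ¬ LinearIndependent ℝ u) {y : E} {i₁ : ι}
    (hy₁ : ⟪u i₁, y⟫_ℝ ≤ 0) (hy : ∀ i ≠ i₁, ⟪u i, y⟫_ℝ < 0) : u i₁ = 0 := by
  obtain ⟨d, hd, ⟨i, hdi⟩, hsum⟩ := exists_nonneg_relation_of_pairwise_inner_nonpos hu hdep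
  have hy' : ∀ j, ⟪u j, y⟫_ℝ ≤ 0 := fun j => by
    rcases eq_or_ne j i₁ with rfl | hj
    exacts [hy₁, (hy j hj).le]
  have hvanish : ∀ j ≠ i₁, d j = 0 := fun j hj =>
    eq_zero_of_sum_smul_eq_zero_of_inner_neg hd hsum hy' (hy j hj)
  obtain rfl : i = i₁ := by_contra fun h => hdi (hvanish i h)
  rw [Fintype.sum_eq_single i (fun j hj => by rw [hvanish j hj, zero_smul])] at hsum
  exact (smul_eq_zero.1 hsum).resolve_left hdi

end InnerNonpos

theorem IsCompact.exists_pos_forall_exists_le {X ι : Type*} [TopologicalSpace X] {K : Set X}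
    (hK : IsCompact K) {f : ι → X → ℝ} (hf : ∀ i, Continuous (f i))
    (hpos : ∀ x ∈ K, ∃ i, 0 < f i x) : ∃ δ > (0 : ℝ), ∀ x ∈ K, ∃ i, δ ≤ f i x := by
  let U : ℕ → Set X := fun k => ⋃ i, {x | 1 / ((k : ℝ) + 1) < f i x}
  have hU : Monotone U := fun k l hkl => Set.iUnion_mono fun i =>
    Set.ofPred_subset_ofPred.2 fun x => (Nat.one_div_le_one_div hkl).trans_lt
  obtain ⟨k, hk⟩ := hK.elim_directed_cover U
    (fun k => isOpen_iUnion fun i => isOpen_lt continuous_const (hf i))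
    (fun x hx => by
      obtain ⟨i, hi⟩ := hpos x hx
      obtain ⟨k, hk⟩ := exists_nat_one_div_lt hi
      exact Set.mem_iUnion.2 ⟨k, Set.mem_iUnion.2 ⟨i, hk⟩⟩)
    hU.directed_le
  refine ⟨1 / ((k : ℝ) + 1), Nat.one_div_pos_of_nat, fun x hx => ?_⟩
  obtain ⟨i, hi⟩ := Set.mem_iUnion.1 (hk hx)
  exact ⟨i, hi.le⟩

section Configuration

variable {E : Type*} [NormedAddCommGroup E] [InnerProductSpace ℝ E] [FiniteDimensional ℝ E]
  {n : ℕ}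

theorem eq_zero_of_pairwise_inner_nonpos (hE : Module.finrank ℝ E ≤ n)
    {v : Fin (n + 2) → E} (hv : Pairwise fun i j => ⟪v i, v j⟫_ℝ ≤ 0)
    (h0 : ∀ i : Fin (n + 2), 2 ≤ (i : ℕ) → ⟪v 0, v i⟫_ℝ < 0) : v 1 = 0 := by
  have hdep : ¬ LinearIndependent ℝ (v ∘ Fin.succ) := fun h => by
    have := h.fintype_card_le_finrank
    simp only [Fintype.card_fin] at this
    omega
  refine eq_zero_of_not_linearIndependent_of_inner_nonpos (i₁ := 0) (y := v 0)
    (hv.comp_of_injective (Fin.succ_injective _)) hdep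
    (by simpa only [Function.comp_apply, real_inner_comm] using hv (Fin.succ_ne_zero 0)) ?_
  intro i hi
  rw [real_inner_comm]
  apply h0
  have := Fin.pos_iff_ne_zero.2 hi
  simp only [Fin.val_succ]
  omega

theorem exists_pos_forall_exists_le_inner (hE : Module.finrank ℝ E ≤ n) {ε : ℝ} (hε : 0 < ε) :
    ∃ δ > (0 : ℝ), ∀ v : Fin (n + 2) → E, (∀ i, ‖v i‖ ≤ 1) →
      (∀ i : Fin (n + 2), 2 ≤ (i : ℕ) → ⟪v 0, v i⟫_ℝ ≤ -ε) → ε ≤ ‖v 1‖ →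
      ∃ i j, i ≠ j ∧ δ ≤ ⟪v i, v j⟫_ℝ := by
  let K : Set (Fin (n + 2) → E) := {v | (∀ i, ‖v i‖ ≤ 1) ∧
    (∀ i : Fin (n + 2), 2 ≤ (i : ℕ) → ⟪v 0, v i⟫_ℝ ≤ -ε) ∧ ε ≤ ‖v 1‖}
  have hK : IsCompact K := by
    refine (isCompact_univ_pi fun _ => isCompact_closedBall (0 : E) 1).of_isClosed_subset ?_
      fun v hv i _ => mem_closedBall_zero_iff.2 (hv.1 i)
    simp only [K, Set.ofPred_and, Set.ofPred_forall]
    exact (isClosed_iInter fun i => isClosed_le (continuous_apply i).norm continuous_const).inter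
      ((isClosed_iInter fun i => isClosed_iInter fun _ =>
        isClosed_le ((continuous_apply 0).inner (continuous_apply i)) continuous_const).inter
      (isClosed_le continuous_const (continuous_apply 1).norm))
  have hpos : ∀ v ∈ K, ∃ p : {p : Fin (n + 2) × Fin (n + 2) // p.1 ≠ p.2},
      0 < ⟪v p.1.1, v p.1.2⟫_ℝ := by
    rintro v ⟨-, h0, h1⟩
    by_contra! hv
    have := eq_zero_of_pairwise_inner_nonpos hE (fun i j hij => hv ⟨(i, j), hij⟩)
      fun i hi => (h0 i hi).trans_lt (neg_neg_of_pos hε)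
    rw [this, norm_zero] at h1
    exact hε.not_ge h1
  obtain ⟨δ, hδ, hK⟩ := hK.exists_pos_forall_exists_le
    (fun p => (continuous_apply _).inner (continuous_apply _)) hpos
  refine ⟨δ, hδ, fun v hv h0 h1 => ?_⟩
  obtain ⟨⟨⟨i, j⟩, hij⟩, h⟩ := hK v ⟨hv, h0, h1⟩
  exact ⟨i, j, hij, h⟩

end Configuration

namespace DERData

variable {n : ℕ}

theorem exists_mem_inner_eq_sSup (f : DERData n) (α : Fin f.m) (x : EuclideanSpace ℝ (Fin n)) :
    ∃ p ∈ f.A α, ⟪p, x⟫_ℝ = sSup ((fun a => ⟪a, x⟫_ℝ) '' f.A α) :=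
  ((f.compact' α).image (continuous_id.inner continuous_const)).sSup_mem
    ((f.nonempty' α).image _)

theorem norm_sum_smul_le_one (f : DERData n) {p : Fin f.m → EuclideanSpace ℝ (Fin n)}
    (hp : ∀ α, p α ∈ f.A α) : ‖∑ α, f.w α • p α‖ ≤ 1 :=
  calc ‖∑ α, f.w α • p α‖ ≤ ∑ α, ‖f.w α • p α‖ := norm_sum_le _ _
    _ = ∑ α, f.w α := Finset.sum_congr rfl fun α _ => by
      rw [norm_smul, mem_sphere_zero_iff_norm.1 (f.subset_sphere α (hp α)), mul_one,
        Real.norm_of_nonneg (f.nonneg α)]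
    _ ≤ 1 := f.sum_le_one

theorem inner_le_sSup_image2 (f g : DERData n) {α : Fin f.m} {β : Fin g.m}
    {a b : EuclideanSpace ℝ (Fin n)} (ha : a ∈ f.A α) (hb : b ∈ g.A β) :
    ⟪a, b⟫_ℝ ≤ sSup (Set.image2 (fun a b => ⟪a, b⟫_ℝ) (f.A α) (g.A β)) := by
  refine le_csSup ⟨1, ?_⟩ (Set.mem_image2_of_mem ha hb)
  rintro _ ⟨a, ha, b, hb, rfl⟩
  calc ⟪a, b⟫_ℝ ≤ ‖a‖ * ‖b‖ := real_inner_le_norm a b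
    _ = 1 := by
      rw [mem_sphere_zero_iff_norm.1 (f.subset_sphere α ha),
        mem_sphere_zero_iff_norm.1 (g.subset_sphere β hb), one_mul]

theorem inner_sum_smul_le_sprod (f g : DERData n) {p : Fin f.m → EuclideanSpace ℝ (Fin n)}
    {q : Fin g.m → EuclideanSpace ℝ (Fin n)} (hp : ∀ α, p α ∈ f.A α) (hq : ∀ β, q β ∈ g.A β) :
    ⟪∑ α, f.w α • p α, ∑ β, g.w β • q β⟫_ℝ ≤ f.sprod g := by
  rw [sprod, sum_inner]
  simp only [inner_sum, real_inner_smul_left, real_inner_smul_right]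
  refine Finset.sum_le_sum fun α _ => Finset.sum_le_sum fun β _ => ?_
  rw [mul_left_comm, ← mul_assoc]
  exact mul_le_mul_of_nonneg_left (inner_le_sSup_image2 f g (hp α) (hq β))
    (mul_nonneg (f.nonneg α) (g.nonneg β))

theorem toFun_eq_neg_inner_sum_smul (f : DERData n) {x : EuclideanSpace ℝ (Fin n)}
    {p : Fin f.m → EuclideanSpace ℝ (Fin n)}
    (hp : ∀ α, ⟪p α, x⟫_ℝ = sSup ((fun a => ⟪a, x⟫_ℝ) '' f.A α)) :
    f.toFun x = -⟪∑ α, f.w α • p α, x⟫_ℝ := by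
  simp only [toFun, sum_inner, real_inner_smul_left, hp]

end DERData

theorem stmt_0_general (n : ℕ) (ε : ℝ) (hε : ε ∈ Set.Ioo (0 : ℝ) 1) :
    ∃ δ > (0 : ℝ), ¬ ∃ f : Fin (n + 2) → DERData n,
      (∀ i : Fin (n + 2), 2 ≤ (i : ℕ) → (f 0).sprod (f i) < -ε) ∧
      (∀ i j : Fin (n + 2), i ≠ j → (f i).sprod (f j) < δ) ∧
      ε < sSup ((f 1).toFun '' Metric.sphere (0 : EuclideanSpace ℝ (Fin n)) 1) := by
  obtain ⟨δ, hδ, hconfig⟩ := exists_pos_forall_exists_le_inner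
    (E := EuclideanSpace ℝ (Fin n)) finrank_euclideanSpace_fin.le hε.1
  refine ⟨δ, hδ, ?_⟩
  rintro ⟨f, hf0, hf, hsup⟩
  obtain ⟨_, ⟨x, hx, rfl⟩, hεx⟩ :
      ∃ y ∈ (f 1).toFun '' Metric.sphere (0 : EuclideanSpace ℝ (Fin n)) 1, ε < y := by
    -- no nonemptiness or boundedness is needed: the junk value of `sSup` on `ℝ` is `0 ≤ ε`
    by_contra! h
    exact (Real.sSup_le h hε.1.le).not_gt hsup
  choose p hpA hpx using fun i α => (f i).exists_mem_inner_eq_sSup α x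
  let V i := ∑ α, (f i).w α • p i α
  have hV : ∀ i j, ⟪V i, V j⟫_ℝ ≤ (f i).sprod (f j) := fun i j =>
    (f i).inner_sum_smul_le_sprod (f j) (hpA i) (hpA j)
  have hV1 : ε ≤ ‖V 1‖ :=
    calc ε ≤ -⟪V 1, x⟫_ℝ := (f 1).toFun_eq_neg_inner_sum_smul (hpx 1) ▸ hεx.le
      _ ≤ ‖V 1‖ * ‖x‖ := (neg_le_abs _).trans (abs_real_inner_le_norm _ _)
      _ = ‖V 1‖ := by rw [mem_sphere_zero_iff_norm.1 hx, mul_one]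
  obtain ⟨i, j, hij, hδij⟩ := hconfig V (fun i => (f i).norm_sum_smul_le_one (hpA i))
    (fun i hi => ((hV 0 i).trans_lt (hf0 i hi)).le) hV1
  exact (hδij.trans (hV i j)).not_gt (hf i j hij)

/-- Lemma 5.1 (round-sphere case): for `n ≥ 2` and `ε ∈ (0,1)` there is `δ > 0` such that
there are no DER data `f₁, …, f_{n+2}` on `S^{n-1}` with `⟨f₁, f_i⟩ < -ε` for `i ≥ 3`,
`⟨f_i, f_j⟩ < δ` for `i ≠ j`, and `sup f₂ > ε`. -/
theorem stmt_0 (n : ℕ) (hn : 2 ≤ n) (ε : ℝ) (hε : ε ∈ Set.Ioo (0 : ℝ) 1) :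
    ∃ δ > (0 : ℝ), ¬ ∃ f : Fin (n + 2) → DERData n,
      (∀ i : Fin (n + 2), 2 ≤ (i : ℕ) → (f 0).sprod (f i) < -ε) ∧
      (∀ i j : Fin (n + 2), i ≠ j → (f i).sprod (f j) < δ) ∧
      ε < sSup ((f 1).toFun '' Metric.sphere (0 : EuclideanSpace ℝ (Fin n)) 1) :=
  stmt_0_general n ε hε
end
end

section
/- For every integer n ≥ 2 and every ε ∈ (0,1) there exist δ > 0 and c > 0 (depending only on n and ε) with the following property: for every k ≤ n, if f₁, …, f_{k+1} are DER data on the unit sphere S^{n−1} ⊆ ℝⁿ with ⟨f₁, f_i⟩ < −ε for all 2 ≤ i ≤ k+1 and ⟨f_i, f_j⟩ < δ for all 2 ≤ i ≠ j ≤ k+1, then there exists ξ ∈ S^{n−1} such that f₂(ξ) > c and f_i(ξ) = 0 for all 3 ≤ i ≤ k+1. -/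
open scoped InnerProductSpace

noncomputable section

/-!
Each DER function is minus the support function of the weighted Minkowski sum
`K f = ∑ a_α A_α ⊆ closedBall 0 1`, and `⟪x, y⟫ ≤ ⟨f, g⟩` for `x ∈ K f`, `y ∈ K g`.
Fix `p ∈ K f₁`; then `⟪v, p⟫ < -ε` for `v ∈ K fᵢ`, `i ≥ 2`, and the central projection
`u(v) = p + v / (-⟪v, p⟫)` turns `⟨fᵢ, fⱼ⟩ < δ = ε² / 2` into `⟪u(v), u(w)⟫ ≤ -1/2`.
Maximise `-⟪u₀, x⟫ - ‖x‖² / 4` (with `u₀ ∈ u(K f₂)`; its nonnegative part is bounded) over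
the closed set cut out by `⟪u, x⟫ ≤ 1` on `u(K fᵢ)`, `i ≥ 3`, and `⟪u, x⟫ ≤ 1/2` on `u(K f₂)`.
At a maximiser `η` every constraint `i ≥ 3` is attained: otherwise a short step along the maximiser `e` of `⟪·, η⟫` on
`u(K fᵢ)` stays feasible and increases the objective, since `⟪e, u₀⟫ ≤ -1/2`.
Finally `q = p + η - ⟪p, η⟫ p` satisfies `⟪v, q⟫ = -⟪v, p⟫ (⟪u(v), η⟫ - 1)`, so `ξ = q / ‖q‖`
has `fᵢ(ξ) = 0` for `i ≥ 3` and `f₂(ξ) ≥ ε / (2 ‖q‖)`.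
-/

section Gnomonic

variable {E : Type*} [NormedAddCommGroup E] [InnerProductSpace ℝ E]

/-- Central projection of `v` onto the affine hyperplane `{x | ⟪x, e⟫ = -1}`, translated by `e`. -/
def gnomonic (e v : E) : E := e + (-⟪v, e⟫_ℝ)⁻¹ • v

lemma continuousOn_gnomonic {e : E} {s : Set E} (hs : ∀ v ∈ s, ⟪v, e⟫_ℝ ≠ 0) :
    ContinuousOn (gnomonic e) s :=
  continuousOn_const.add <|
    ((continuousOn_id.inner continuousOn_const).neg.inv₀ fun v hv => neg_ne_zero.2 (hs v hv)).smul
      continuousOn_id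

lemma norm_gnomonic_le (e v : E) : ‖gnomonic e v‖ ≤ ‖e‖ + ‖v‖ / |⟪v, e⟫_ℝ| := by
  calc ‖gnomonic e v‖ ≤ ‖e‖ + ‖(-⟪v, e⟫_ℝ)⁻¹ • v‖ := norm_add_le _ _
    _ = ‖e‖ + ‖v‖ / |⟪v, e⟫_ℝ| := by
      rw [norm_smul, Real.norm_eq_abs, abs_inv, abs_neg, inv_mul_eq_div]

lemma inner_gnomonic_gnomonic {e v w : E} (hv : ⟪v, e⟫_ℝ ≠ 0) (hw : ⟪w, e⟫_ℝ ≠ 0) :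
    ⟪gnomonic e v, gnomonic e w⟫_ℝ = ‖e‖ ^ 2 - 2 + ⟪v, w⟫_ℝ / (⟪v, e⟫_ℝ * ⟪w, e⟫_ℝ) := by
  simp only [gnomonic, inner_add_left, inner_add_right, real_inner_smul_left,
    real_inner_smul_right, real_inner_self_eq_norm_sq, real_inner_comm w e]
  field_simp
  ring

lemma inner_gnomonic_gnomonic_le {e v w : E} {ε : ℝ} (hε : 0 < ε) (he : ‖e‖ ≤ 1)
    (hv : ε ≤ -⟪v, e⟫_ℝ) (hw : ε ≤ -⟪w, e⟫_ℝ) (hvw : ⟪v, w⟫_ℝ ≤ ε ^ 2 / 2) :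
    ⟪gnomonic e v, gnomonic e w⟫_ℝ ≤ -(1 / 2) := by
  have hvw' : ⟪v, w⟫_ℝ / (⟪v, e⟫_ℝ * ⟪w, e⟫_ℝ) ≤ 1 / 2 := by
    rw [div_le_iff₀ (by nlinarith)]
    nlinarith [mul_le_mul hv hw hε.le (hε.le.trans hv)]
  rw [inner_gnomonic_gnomonic (by linarith) (by linarith)]
  nlinarith [norm_nonneg e]

lemma inner_add_sub_eq_mul_inner_gnomonic {e v : E} (hv : ⟪v, e⟫_ℝ ≠ 0) (η : E) :
    ⟪v, e + η - ⟪e, η⟫_ℝ • e⟫_ℝ = -⟪v, e⟫_ℝ * (⟪gnomonic e v, η⟫_ℝ - 1) := by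
  simp only [gnomonic, inner_add_left, inner_add_right, inner_sub_right, real_inner_smul_left,
    real_inner_smul_right]
  field_simp
  ring

lemma norm_add_sub_inner_smul_le {e : E} (he : ‖e‖ ≤ 1) (η : E) :
    ‖e + η - ⟪e, η⟫_ℝ • e‖ ≤ 1 + 2 * ‖η‖ := by
  have heη : |⟪e, η⟫_ℝ| * ‖e‖ ≤ ‖η‖ := by
    nlinarith [abs_real_inner_le_norm e η, abs_nonneg ⟪e, η⟫_ℝ, norm_nonneg e, norm_nonneg η]
  calc ‖e + η - ⟪e, η⟫_ℝ • e‖ ≤ ‖e‖ + ‖η‖ + |⟪e, η⟫_ℝ| * ‖e‖ := by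
        refine (norm_sub_le _ _).trans (add_le_add (norm_add_le _ _) ?_)
        rw [norm_smul, Real.norm_eq_abs]
    _ ≤ 1 + 2 * ‖η‖ := by linarith

end Gnomonic

section Variational

variable {E : Type*} [NormedAddCommGroup E] [InnerProductSpace ℝ E] {ι : Type*}

def feasibleSet (U : ι → Set E) (U₀ : Set E) : Set E :=
  {x | (∀ i, ∀ u ∈ U i, ⟪u, x⟫_ℝ ≤ 1) ∧ ∀ u ∈ U₀, ⟪u, x⟫_ℝ ≤ 1 / 2}

lemma isClosed_feasibleSet (U : ι → Set E) (U₀ : Set E) : IsClosed (feasibleSet U U₀) := by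
  simp only [feasibleSet, Set.ofPred_and, Set.ofPred_forall]
  exact (isClosed_iInter fun i => isClosed_biInter fun u _ => isClosed_le (by fun_prop)
    (by fun_prop)).inter (isClosed_biInter fun u _ => isClosed_le (by fun_prop) (by fun_prop))

lemma zero_mem_feasibleSet (U : ι → Set E) (U₀ : Set E) : (0 : E) ∈ feasibleSet U U₀ := by
  simp [feasibleSet]

lemma add_smul_mem_feasibleSet {U : ι → Set E} {U₀ : Set E} {x e : E} {j : ι} {B : ℝ}
    (hB : 0 < B) (hx : x ∈ feasibleSet U U₀) (hex : ⟪e, x⟫_ℝ ≤ 1)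
    (hemax : ∀ u ∈ U j, ⟪u, x⟫_ℝ ≤ ⟪e, x⟫_ℝ) (hUe : ∀ u ∈ U j, ⟪u, e⟫_ℝ ≤ B)
    (hUUe : ∀ i, i ≠ j → ∀ u ∈ U i, ⟪u, e⟫_ℝ ≤ 0) (hU₀e : ∀ u ∈ U₀, ⟪u, e⟫_ℝ ≤ 0) :
    x + ((1 - ⟪e, x⟫_ℝ) / B) • e ∈ feasibleSet U U₀ := by
  have hs : 0 ≤ (1 - ⟪e, x⟫_ℝ) / B := div_nonneg (by linarith) hB.le
  have hsB : (1 - ⟪e, x⟫_ℝ) / B * B = 1 - ⟪e, x⟫_ℝ := div_mul_cancel₀ _ hB.ne'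
  refine ⟨fun i u hu => ?_, fun u hu => ?_⟩ <;> rw [inner_add_right, real_inner_smul_right]
  · rcases eq_or_ne i j with rfl | hij
    · nlinarith [hemax u hu, mul_le_mul_of_nonneg_left (hUe u hu) hs]
    · nlinarith [hx.1 i u hu, mul_nonpos_of_nonneg_of_nonpos hs (hUUe i hij u hu)]
  · nlinarith [hx.2 u hu, mul_nonpos_of_nonneg_of_nonpos hs (hU₀e u hu)]

lemma neg_inner_sub_norm_sq_div_four_lt_add_smul {u₀ e x : E} {B : ℝ} (hB : 0 < B)
    (heB : ‖e‖ ^ 2 ≤ B) (he : ⟪e, u₀⟫_ℝ ≤ -(1 / 2)) (hx : ⟪e, x⟫_ℝ < 1) :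
    -⟪u₀, x⟫_ℝ - ‖x‖ ^ 2 / 4 <
      -⟪u₀, x + ((1 - ⟪e, x⟫_ℝ) / B) • e⟫_ℝ - ‖x + ((1 - ⟪e, x⟫_ℝ) / B) • e‖ ^ 2 / 4 := by
  set s := (1 - ⟪e, x⟫_ℝ) / B
  have hs : 0 < s := div_pos (by linarith) hB
  have hsB : s * B = 1 - ⟪e, x⟫_ℝ := div_mul_cancel₀ _ hB.ne'
  rw [inner_add_right, real_inner_smul_right, norm_add_sq_real, norm_smul, Real.norm_eq_abs,
    abs_of_pos hs, real_inner_smul_right, real_inner_comm e u₀, real_inner_comm e x]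
  nlinarith [mul_le_mul_of_nonneg_left heB (sq_nonneg s)]

lemma norm_le_of_norm_sq_div_four_le_neg_inner {u x : E} (h : ‖x‖ ^ 2 / 4 ≤ -⟪u, x⟫_ℝ) :
    ‖x‖ ≤ 4 * ‖u‖ := by
  have hux := (neg_le_abs _).trans (abs_real_inner_le_norm u x)
  by_contra! hlt
  have hx : 0 < ‖x‖ := lt_of_le_of_lt (by positivity) hlt
  nlinarith [mul_lt_mul_of_pos_right hlt hx]

theorem exists_forall_isGreatest_inner_eq_one [ProperSpace E] {U : ι → Set E} {U₀ : Set E}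
    {M : ℝ} (hU : ∀ i, IsCompact (U i)) (hUne : ∀ i, (U i).Nonempty) (hU₀ : U₀.Nonempty)
    (hU₀M : ∀ u ∈ U₀, ‖u‖ ≤ M) (hUU : ∀ i j, i ≠ j → ∀ u ∈ U i, ∀ u' ∈ U j, ⟪u, u'⟫_ℝ ≤ 0)
    (hUU₀ : ∀ i, ∀ u ∈ U i, ∀ w ∈ U₀, ⟪u, w⟫_ℝ ≤ -(1 / 2)) :
    ∃ η : E, ‖η‖ ≤ 4 * M ∧ (∀ i, IsGreatest ((⟪·, η⟫_ℝ) '' U i) 1) ∧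
      ∀ u ∈ U₀, ⟪u, η⟫_ℝ ≤ 1 / 2 := by
  obtain ⟨u₀, hu₀⟩ := hU₀
  set Ψ : E → ℝ := fun x => -⟪u₀, x⟫_ℝ - ‖x‖ ^ 2 / 4
  have hΨ_norm : ∀ x, 0 ≤ Ψ x → ‖x‖ ≤ 4 * M := fun x hx =>
    (norm_le_of_norm_sq_div_four_le_neg_inner (u := u₀) (by simp only [Ψ] at hx; linarith)).trans
      (by linarith [hU₀M u₀ hu₀])
  have hK : IsCompact (feasibleSet U U₀ ∩ {x | 0 ≤ Ψ x}) :=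
    Metric.isCompact_of_isClosed_isBounded
      ((isClosed_feasibleSet U U₀).inter (isClosed_le continuous_const (by fun_prop)))
      ((Metric.isBounded_closedBall (x := 0) (r := 4 * M)).subset fun x hx =>
        mem_closedBall_zero_iff.2 (hΨ_norm x hx.2))
  obtain ⟨η, ⟨hη, hηΨ⟩, hηmax⟩ := hK.exists_isMaxOn
    ⟨0, zero_mem_feasibleSet U U₀, by simp [Ψ]⟩ (by fun_prop : Continuous Ψ).continuousOn
  refine ⟨η, hΨ_norm η hηΨ, fun j => ⟨?_, ?_⟩, hη.2⟩
  swap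
  · rintro _ ⟨u, hu, rfl⟩
    exact hη.1 j u hu
  obtain ⟨e, he, hemax⟩ :=
    (hU j).exists_isMaxOn (hUne j) (by fun_prop : Continuous (⟪·, η⟫_ℝ)).continuousOn
  refine ⟨e, he, le_antisymm (hη.1 j e he) (not_lt.1 fun hlt => ?_)⟩
  obtain ⟨R, hR, hRU⟩ := (hU j).isBounded.exists_pos_norm_le
  have hstep := add_smul_mem_feasibleSet (pow_pos hR 2) hη hlt.le (fun u hu => hemax hu)
    (fun u hu => (real_inner_le_norm u e).trans (by nlinarith [hRU u hu, hRU e he, norm_nonneg u]))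
    (fun i hij u hu => hUU i j hij u hu e he)
    (fun u hu => real_inner_comm e u ▸ (hUU₀ j e he u hu).trans (by norm_num))
  have hincr := neg_inner_sub_norm_sq_div_four_lt_add_smul (pow_pos hR 2)
    (pow_le_pow_left₀ (norm_nonneg _) (hRU e he) 2) (hUU₀ j e he u₀ hu₀) hlt
  exact hincr.not_ge (hηmax ⟨hstep, hηΨ.trans hincr.le⟩)

end Variational

theorem exists_forall_isGreatest_inner_eq_zero {E : Type*} [NormedAddCommGroup E]
    [InnerProductSpace ℝ E] [ProperSpace E] {ι : Type*} {V : ι → Set E} {V₀ : Set E}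
    {p : E} {ε : ℝ} (hε : 0 < ε) (hp : ‖p‖ ≤ 1)
    (hV : ∀ i, IsCompact (V i)) (hVne : ∀ i, (V i).Nonempty) (hV₀ : V₀.Nonempty)
    (hV₀_norm : ∀ v ∈ V₀, ‖v‖ ≤ 1)
    (hVp : ∀ i, ∀ v ∈ V i, ε ≤ -⟪v, p⟫_ℝ) (hV₀p : ∀ v ∈ V₀, ε ≤ -⟪v, p⟫_ℝ)
    (hVV : ∀ i j, i ≠ j → ∀ v ∈ V i, ∀ w ∈ V j, ⟪v, w⟫_ℝ ≤ ε ^ 2 / 2)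
    (hVV₀ : ∀ i, ∀ v ∈ V i, ∀ w ∈ V₀, ⟪v, w⟫_ℝ ≤ ε ^ 2 / 2) :
    ∃ q : E, ‖q‖ ≤ 9 + 8 / ε ∧ (∀ i, IsGreatest ((⟪·, q⟫_ℝ) '' V i) 0) ∧
      ∀ v ∈ V₀, ⟪v, q⟫_ℝ ≤ -(ε / 2) := by
  have hne : ∀ v : E, ε ≤ -⟪v, p⟫_ℝ → ⟪v, p⟫_ℝ ≠ 0 := fun v h => by linarith
  obtain ⟨η, hη_norm, hη, hη₀⟩ := exists_forall_isGreatest_inner_eq_one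
    (U := fun i => gnomonic p '' V i) (U₀ := gnomonic p '' V₀) (M := 1 + 1 / ε)
    (fun i => (hV i).image_of_continuousOn (continuousOn_gnomonic fun v hv => hne v (hVp i v hv)))
    (fun i => (hVne i).image _) (hV₀.image _)
    (by
      rintro _ ⟨v, hv, rfl⟩
      exact (norm_gnomonic_le p v).trans (add_le_add hp
        (div_le_div₀ zero_le_one (hV₀_norm v hv) hε ((hV₀p v hv).trans (neg_le_abs _)))))
    (by
      rintro i j hij _ ⟨v, hv, rfl⟩ _ ⟨w, hw, rfl⟩
      exact (inner_gnomonic_gnomonic_le hε hp (hVp i v hv) (hVp j w hw)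
        (hVV i j hij v hv w hw)).trans (by norm_num))
    (by
      rintro i _ ⟨v, hv, rfl⟩ _ ⟨w, hw, rfl⟩
      exact inner_gnomonic_gnomonic_le hε hp (hVp i v hv) (hV₀p w hw) (hVV₀ i v hv w hw))
  have hq : ∀ v : E, ε ≤ -⟪v, p⟫_ℝ →
      ⟪v, p + η - ⟪p, η⟫_ℝ • p⟫_ℝ = -⟪v, p⟫_ℝ * (⟪gnomonic p v, η⟫_ℝ - 1) := fun v h =>
    inner_add_sub_eq_mul_inner_gnomonic (hne v h) η
  refine ⟨p + η - ⟪p, η⟫_ℝ • p, ?_, fun i => ⟨?_, ?_⟩, fun v hv => ?_⟩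
  · calc ‖p + η - ⟪p, η⟫_ℝ • p‖ ≤ 1 + 2 * (4 * (1 + 1 / ε)) := by
          linarith [norm_add_sub_inner_smul_le hp η]
      _ = 9 + 8 / ε := by ring
  · obtain ⟨_, ⟨v, hv, rfl⟩, hv1⟩ := (hη i).1
    exact ⟨v, hv, by simp only [hq v (hVp i v hv), hv1, sub_self, mul_zero]⟩
  · rintro _ ⟨v, hv, rfl⟩
    dsimp only
    rw [hq v (hVp i v hv)]
    exact mul_nonpos_of_nonneg_of_nonpos (by linarith [hVp i v hv])
      (sub_nonpos.2 ((hη i).2 ⟨_, ⟨v, hv, rfl⟩, rfl⟩))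
  · rw [hq v (hV₀p v hv)]
    nlinarith [hV₀p v hv, hη₀ _ ⟨v, hv, rfl⟩]
namespace DERData

variable {n : ℕ}

def minkowskiSum (f : DERData n) : Set (EuclideanSpace ℝ (Fin n)) :=
  (fun b : Fin f.m → EuclideanSpace ℝ (Fin n) => ∑ α, f.w α • b α) '' Set.univ.pi f.A

lemma minkowskiSum_nonempty (f : DERData n) : f.minkowskiSum.Nonempty :=
  (Set.univ_pi_nonempty_iff.2 f.nonempty').image _

lemma isCompact_minkowskiSum (f : DERData n) : IsCompact f.minkowskiSum :=
  (isCompact_univ_pi f.compact').image (by fun_prop)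

lemma norm_le_one_of_mem_minkowskiSum {f : DERData n} {x : EuclideanSpace ℝ (Fin n)}
    (hx : x ∈ f.minkowskiSum) : ‖x‖ ≤ 1 := by
  obtain ⟨b, hb, rfl⟩ := hx
  calc ‖∑ α, f.w α • b α‖ ≤ ∑ α, ‖f.w α • b α‖ := norm_sum_le _ _
    _ = ∑ α, f.w α := by
      refine Finset.sum_congr rfl fun α _ => ?_
      rw [norm_smul, mem_sphere_zero_iff_norm.1 (f.subset_sphere α (hb α trivial)), mul_one,
        Real.norm_of_nonneg (f.nonneg α)]
    _ ≤ 1 := f.sum_le_one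

lemma inner_le_sprod {f g : DERData n} {x y : EuclideanSpace ℝ (Fin n)}
    (hx : x ∈ f.minkowskiSum) (hy : y ∈ g.minkowskiSum) : ⟪x, y⟫_ℝ ≤ f.sprod g := by
  obtain ⟨a, ha, rfl⟩ := hx
  obtain ⟨b, hb, rfl⟩ := hy
  rw [sum_inner]
  refine Finset.sum_le_sum fun α _ => ?_
  rw [inner_sum]
  refine Finset.sum_le_sum fun β _ => ?_
  rw [real_inner_smul_left, real_inner_smul_right, ← mul_assoc]
  refine mul_le_mul_of_nonneg_left
    (le_csSup ?_ (Set.mem_image2_of_mem (ha α trivial) (hb β trivial)))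
    (mul_nonneg (f.nonneg α) (g.nonneg β))
  rw [← Set.image_prod]
  exact (((f.compact' α).prod (g.compact' β)).image (by fun_prop)).bddAbove

lemma isGreatest_neg_toFun (f : DERData n) (x : EuclideanSpace ℝ (Fin n)) :
    IsGreatest ((⟪·, x⟫_ℝ) '' f.minkowskiSum) (-f.toFun x) := by
  have hK : ∀ α, IsCompact ((⟪·, x⟫_ℝ) '' f.A α) := fun α => (f.compact' α).image (by fun_prop)
  choose a ha hax using fun α => (hK α).sSup_mem ((f.nonempty' α).image _)
  refine ⟨⟨_, ⟨a, fun α _ => ha α, rfl⟩, ?_⟩, ?_⟩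
  · simp only [toFun, neg_neg, sum_inner, real_inner_smul_left, hax]
  · rintro _ ⟨_, ⟨b, hb, rfl⟩, rfl⟩
    simp only [toFun, neg_neg, sum_inner, real_inner_smul_left]
    exact Finset.sum_le_sum fun α _ => mul_le_mul_of_nonneg_left
      (le_csSup (hK α).bddAbove ⟨b α, hb α trivial, rfl⟩) (f.nonneg α)

lemma toFun_eq_neg_of_isGreatest {f : DERData n} {x : EuclideanSpace ℝ (Fin n)} {r : ℝ}
    (h : IsGreatest ((⟪·, x⟫_ℝ) '' f.minkowskiSum) r) : f.toFun x = -r := by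
  rw [← (f.isGreatest_neg_toFun x).unique h, neg_neg]

lemma le_toFun_of_forall_inner_le {f : DERData n} {x : EuclideanSpace ℝ (Fin n)} {c : ℝ}
    (h : ∀ v ∈ f.minkowskiSum, ⟪v, x⟫_ℝ ≤ -c) : c ≤ f.toFun x := by
  obtain ⟨v, hv, hvx⟩ := (f.isGreatest_neg_toFun x).1
  linarith [h v hv, show ⟪v, x⟫_ℝ = -f.toFun x from hvx]

lemma toFun_smul (f : DERData n) {r : ℝ} (hr : 0 ≤ r) (x : EuclideanSpace ℝ (Fin n)) :
    f.toFun (r • x) = r * f.toFun x := by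
  obtain ⟨⟨v, hv, hvx⟩, hmax⟩ := f.isGreatest_neg_toFun x
  have h : IsGreatest ((⟪·, r • x⟫_ℝ) '' f.minkowskiSum) (r * -f.toFun x) := by
    refine ⟨⟨v, hv, by simp only [real_inner_smul_right, ← hvx]⟩, ?_⟩
    rintro _ ⟨w, hw, rfl⟩
    simp only [real_inner_smul_right]
    exact mul_le_mul_of_nonneg_left (hmax ⟨w, hw, rfl⟩) hr
  rw [toFun_eq_neg_of_isGreatest h]
  ring

lemma exists_norm_eq_one_toFun_eq_zero {ι : Type*} {f : ι → DERData n} {g : DERData n}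
    {q : EuclideanSpace ℝ (Fin n)} {c R : ℝ} (hc : 0 < c) (hqR : ‖q‖ ≤ R)
    (hf : ∀ i, IsGreatest ((⟪·, q⟫_ℝ) '' (f i).minkowskiSum) 0)
    (hg : ∀ v ∈ g.minkowskiSum, ⟪v, q⟫_ℝ ≤ -c) :
    ∃ ξ : EuclideanSpace ℝ (Fin n), ‖ξ‖ = 1 ∧ c / R ≤ g.toFun ξ ∧ ∀ i, (f i).toFun ξ = 0 := by
  obtain ⟨v, hv⟩ := g.minkowskiSum_nonempty
  have hq : 0 < ‖q‖ := norm_pos_iff.2 fun h => by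
    linarith [hg v hv, show ⟪v, q⟫_ℝ = 0 by rw [h, inner_zero_right]]
  refine ⟨‖q‖⁻¹ • q, by rw [norm_smul, norm_inv, norm_norm, inv_mul_cancel₀ hq.ne'], ?_,
    fun i => ?_⟩
  · rw [toFun_smul _ (inv_nonneg.2 hq.le)]
    calc c / R ≤ ‖q‖⁻¹ * c := by
          rw [inv_mul_eq_div]
          exact div_le_div_of_nonneg_left hc.le hq hqR
      _ ≤ ‖q‖⁻¹ * g.toFun q :=
          mul_le_mul_of_nonneg_left (le_toFun_of_forall_inner_le hg) (inv_nonneg.2 hq.le)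
  · rw [toFun_smul _ (inv_nonneg.2 hq.le), toFun_eq_neg_of_isGreatest (hf i), neg_zero,
      mul_zero]

end DERData

open DERData in
/-- Here `f 0, f 1, …, f k` play the roles of `f₁, f₂, …, f_{k+1}`. -/
theorem stmt_3_general (n : ℕ) (ε : ℝ) (hε : ε ∈ Set.Ioo (0 : ℝ) 1) :
    ∃ δ > (0 : ℝ), ∃ c > (0 : ℝ), ∀ k : ℕ, 1 ≤ k → k ≤ n →
      ∀ f : Fin (k + 1) → DERData n,
        (∀ i : Fin (k + 1), 1 ≤ (i : ℕ) → (f 0).sprod (f i) < -ε) →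
        (∀ i j : Fin (k + 1), 1 ≤ (i : ℕ) → 1 ≤ (j : ℕ) → i ≠ j → (f i).sprod (f j) < δ) →
        ∃ ξ : EuclideanSpace ℝ (Fin n), ‖ξ‖ = 1 ∧
          c < (f 1).toFun ξ ∧
          ∀ i : Fin (k + 1), 2 ≤ (i : ℕ) → (f i).toFun ξ = 0 := by
  obtain ⟨hε0, hε1⟩ := hε
  refine ⟨ε ^ 2 / 2, by positivity, ε ^ 2 / 40, by positivity, fun k hk _ f hf₀ hδ => ?_⟩
  have h1 : ((1 : Fin (k + 1)) : ℕ) = 1 := by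
    rw [Fin.val_one', Nat.mod_eq_of_lt (by omega)]
  obtain ⟨p, hp⟩ := (f 0).minkowskiSum_nonempty
  have hfp : ∀ i : Fin (k + 1), 1 ≤ (i : ℕ) → ∀ v ∈ (f i).minkowskiSum, ε ≤ -⟪v, p⟫_ℝ :=
    fun i hi v hv => by linarith [real_inner_comm p v, inner_le_sprod hp hv, hf₀ i hi]
  have hff : ∀ i j : Fin (k + 1), 1 ≤ (i : ℕ) → 1 ≤ (j : ℕ) → i ≠ j →
      ∀ v ∈ (f i).minkowskiSum, ∀ w ∈ (f j).minkowskiSum, ⟪v, w⟫_ℝ ≤ ε ^ 2 / 2 :=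
    fun i j hi hj hij v hv w hw => ((inner_le_sprod hv hw).trans_lt (hδ i j hi hj hij)).le
  obtain ⟨q, hq_norm, hq_zero, hq_neg⟩ := exists_forall_isGreatest_inner_eq_zero
    (V := fun i : {i : Fin (k + 1) // 2 ≤ (i : ℕ)} => (f i).minkowskiSum)
    hε0 (norm_le_one_of_mem_minkowskiSum hp) (fun _ => isCompact_minkowskiSum _)
    (fun _ => minkowskiSum_nonempty _) (f 1).minkowskiSum_nonempty
    (fun _ => norm_le_one_of_mem_minkowskiSum) (fun i => hfp i (by omega)) (hfp 1 h1.ge)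
    (fun i j hij => hff i j (by omega) (by omega) (Subtype.coe_ne_coe.2 hij))
    (fun i => hff i 1 (by omega) h1.ge (Fin.ne_of_val_ne (by rw [h1]; have := i.2; omega)))
  obtain ⟨ξ, hξ, hξ₁, hξ₀⟩ :=
    exists_norm_eq_one_toFun_eq_zero (by positivity) hq_norm hq_zero hq_neg
  refine ⟨ξ, hξ, lt_of_lt_of_le ?_ hξ₁, fun i hi => hξ₀ ⟨i, hi⟩⟩
  rw [lt_div_iff₀ (by positivity)]
  field_simp
  nlinarith

/-- Lemma 5.2(3) (round-sphere case). Here `f 0, f 1, …, f k` play the roles of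
`f₁, f₂, …, f_{k+1}`. -/
theorem stmt_3 (n : ℕ) (hn : 2 ≤ n) (ε : ℝ) (hε : ε ∈ Set.Ioo (0 : ℝ) 1) :
    ∃ δ > (0 : ℝ), ∃ c > (0 : ℝ), ∀ k : ℕ, 1 ≤ k → k ≤ n →
      ∀ f : Fin (k + 1) → DERData n,
        (∀ i : Fin (k + 1), 1 ≤ (i : ℕ) → (f 0).sprod (f i) < -ε) →
        (∀ i j : Fin (k + 1), 1 ≤ (i : ℕ) → 1 ≤ (j : ℕ) → i ≠ j → (f i).sprod (f j) < δ) →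
        ∃ ξ : EuclideanSpace ℝ (Fin n), ‖ξ‖ = 1 ∧
          c < (f 1).toFun ξ ∧
          ∀ i : Fin (k + 1), 2 ≤ (i : ℕ) → (f i).toFun ξ = 0 :=
  stmt_3_general n ε hε

end
end

section
/- Let n ≥ 2, ε ∈ (0,1), and let f, g₁, …, g_m be DER data on the unit sphere S^{n−1} ⊆ ℝⁿ such that ⟨f, g_i⟩ < −ε for all 1 ≤ i ≤ m. Then there exists η ∈ S^{n−1} such that g_i(η) > ε for all 1 ≤ i ≤ m. -/
open scoped InnerProductSpace

noncomputable section

/-- Remark 5.3(1) (round-sphere case): if `⟨f, gᵢ⟩ < -ε` for all `i`, then some unit vector `η`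
satisfies `gᵢ(η) > ε` for all `i`. -/
theorem stmt_4 (n : ℕ) (hn : 2 ≤ n) (ε : ℝ) (hε : ε ∈ Set.Ioo (0 : ℝ) 1)
    (m : ℕ) (f : DERData n) (g : Fin m → DERData n)
    (h : ∀ i, f.sprod (g i) < -ε) :
    ∃ η : EuclideanSpace ℝ (Fin n), ‖η‖ = 1 ∧ ∀ i, ε < (g i).toFun η := by
  rcases Nat.eq_zero_or_pos m with hm | hm
  · subst hm
    refine ⟨EuclideanSpace.single ⟨0, by omega⟩ 1, ?_, fun i => i.elim0⟩
    simp [EuclideanSpace.norm_single]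
  choose a haA using f.nonempty'
  have hnorm_a : ∀ α, ‖a α‖ = 1 := fun α => by
    have := f.subset_sphere α (haA α)
    simpa [mem_sphere_zero_iff_norm] using this
  set z : EuclideanSpace ℝ (Fin n) := ∑ α, f.w α • a α with hz
  have hzle : ‖z‖ ≤ 1 := by
    calc ‖z‖ ≤ ∑ α, ‖f.w α • a α‖ := norm_sum_le _ _
    _ = ∑ α, f.w α := by
        refine Finset.sum_congr rfl fun α _ => ?_
        rw [norm_smul, hnorm_a α, mul_one, Real.norm_eq_abs, abs_of_nonneg (f.nonneg α)]
    _ ≤ 1 := f.sum_le_one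
  have hbdd : ∀ (gg : DERData n) (α : Fin f.m) (β : Fin gg.m),
      BddAbove (Set.image2 (fun a b => ⟪a, b⟫_ℝ) (f.A α) (gg.A β)) := by
    intro gg α β
    refine ⟨1, ?_⟩
    rintro x ⟨u, hu, v, hv, rfl⟩
    have h1 : ‖u‖ = 1 := by simpa [mem_sphere_zero_iff_norm] using f.subset_sphere α hu
    have h2 : ‖v‖ = 1 := by simpa [mem_sphere_zero_iff_norm] using gg.subset_sphere β hv
    calc ⟪u, v⟫_ℝ ≤ ‖u‖ * ‖v‖ := real_inner_le_norm u v
    _ = 1 := by rw [h1, h2, mul_one]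
  have hkey : ∀ (gg : DERData n) (α : Fin f.m) (β : Fin gg.m) (b : EuclideanSpace ℝ (Fin n)),
      b ∈ gg.A β → ⟪a α, b⟫_ℝ ≤ sSup (Set.image2 (fun a b => ⟪a, b⟫_ℝ) (f.A α) (gg.A β)) := by
    intro gg α β b hb
    exact le_csSup (hbdd gg α β) (Set.mem_image2_of_mem (haA α) hb)
  have hinner_z : ∀ (b : EuclideanSpace ℝ (Fin n)), ⟪z, b⟫_ℝ = ∑ α, f.w α * ⟪a α, b⟫_ℝ := by
    intro b
    rw [hz, sum_inner]
    exact Finset.sum_congr rfl fun α _ => real_inner_smul_left _ _ _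
  by_cases hz0 : z = 0
  · exfalso
    set g0 := g ⟨0, hm⟩ with hg0
    choose b hbB using g0.nonempty'
    have hge : (0 : ℝ) ≤ f.sprod g0 := by
      have h1 : ∀ β : Fin g0.m, ∑ α, f.w α * (g0.w β * ⟪a α, b β⟫_ℝ)
          ≤ ∑ α, f.w α * g0.w β * sSup (Set.image2 (fun a b => ⟪a, b⟫_ℝ) (f.A α) (g0.A β)) := by
        intro β
        refine Finset.sum_le_sum fun α _ => ?_
        rw [← mul_assoc]
        exact mul_le_mul_of_nonneg_left (hkey g0 α β (b β) (hbB β))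
          (mul_nonneg (f.nonneg α) (g0.nonneg β))
      have h2 : ∀ β : Fin g0.m, (0 : ℝ) = ∑ α, f.w α * (g0.w β * ⟪a α, b β⟫_ℝ) := by
        intro β
        have : ⟪z, b β⟫_ℝ = 0 := by rw [hz0]; simp
        rw [hinner_z] at this
        calc (0 : ℝ) = g0.w β * ∑ α, f.w α * ⟪a α, b β⟫_ℝ := by rw [this, mul_zero]
        _ = ∑ α, f.w α * (g0.w β * ⟪a α, b β⟫_ℝ) := by
            rw [Finset.mul_sum]; exact Finset.sum_congr rfl fun α _ => by ring
      have : (0 : ℝ) ≤ ∑ β, ∑ α, f.w α * g0.w β *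
          sSup (Set.image2 (fun a b => ⟪a, b⟫_ℝ) (f.A α) (g0.A β)) := by
        refine Finset.sum_nonneg fun β _ => ?_
        calc (0 : ℝ) = ∑ α, f.w α * (g0.w β * ⟪a α, b β⟫_ℝ) := h2 β
        _ ≤ _ := h1 β
      rw [DERData.sprod, Finset.sum_comm]
      exact this
    have := h ⟨0, hm⟩
    rw [← hg0] at this
    linarith [hε.1]
  · have hzpos : 0 < ‖z‖ := norm_pos_iff.mpr hz0
    have hinv1 : 1 ≤ ‖z‖⁻¹ := by
      rw [le_inv_comm₀ one_pos hzpos]; simpa using hzle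
    refine ⟨‖z‖⁻¹ • z, ?_, ?_⟩
    · rw [norm_smul, Real.norm_eq_abs, abs_of_nonneg (by positivity)]
      field_simp
    · intro i
      set gi := g i with hgi
      set η := ‖z‖⁻¹ • z with hη
      -- each sSup bound
      have hsup : ∀ β : Fin gi.m, sSup ((fun a => ⟪a, η⟫_ℝ) '' gi.A β)
          ≤ ‖z‖⁻¹ * ∑ α, f.w α * sSup (Set.image2 (fun a b => ⟪a, b⟫_ℝ) (f.A α) (gi.A β)) := by
        intro β
        refine csSup_le ((gi.nonempty' β).image _) ?_
        rintro x ⟨b, hb, rfl⟩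
        show ⟪b, η⟫_ℝ ≤ _
        have : ⟪b, η⟫_ℝ = ‖z‖⁻¹ * ⟪z, b⟫_ℝ := by
          rw [hη, real_inner_smul_right, real_inner_comm]
        rw [this, hinner_z]
        refine mul_le_mul_of_nonneg_left ?_ (by positivity)
        exact Finset.sum_le_sum fun α _ =>
          mul_le_mul_of_nonneg_left (hkey gi α β b hb) (f.nonneg α)
      have hsum : ∑ β, gi.w β * sSup ((fun a => ⟪a, η⟫_ℝ) '' gi.A β)
          ≤ ‖z‖⁻¹ * f.sprod gi := by
        calc ∑ β, gi.w β * sSup ((fun a => ⟪a, η⟫_ℝ) '' gi.A β)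
            ≤ ∑ β, gi.w β * (‖z‖⁻¹ * ∑ α, f.w α *
              sSup (Set.image2 (fun a b => ⟪a, b⟫_ℝ) (f.A α) (gi.A β))) :=
              Finset.sum_le_sum fun β _ =>
                mul_le_mul_of_nonneg_left (hsup β) (gi.nonneg β)
        _ = ‖z‖⁻¹ * ∑ β, ∑ α, f.w α * gi.w β *
              sSup (Set.image2 (fun a b => ⟪a, b⟫_ℝ) (f.A α) (gi.A β)) := by
              simp only [Finset.mul_sum]
              exact Finset.sum_congr rfl fun β _ => Finset.sum_congr rfl fun α _ => by ring
        _ = ‖z‖⁻¹ * f.sprod gi := by rw [DERData.sprod, Finset.sum_comm]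
      have hs := h i
      rw [← hgi] at hs
      have hε0 := hε.1
      have hlt : ‖z‖⁻¹ * f.sprod gi < -ε := by nlinarith
      rw [DERData.toFun]
      have : ∑ β, gi.w β * sSup ((fun a => ⟪a, η⟫_ℝ) '' gi.A β) < -ε := lt_of_le_of_lt hsum hlt
      linarith

end
end

section
/- For every DER data f = ((a_α, A_α))_{α=1}^m on the unit sphere S^{n−1} ⊆ ℝⁿ (n ≥ 2) there exist â ∈ [0,1] and Â ∈ S^{n−1} such that for every DER data g = ((b_β, B_β))_{β=1}^{m'} on S^{n−1} one has Σ_β â · b_β · sup_{b ∈ B_β} ⟨Â, b⟩ ≤ ⟨f, g⟩; equivalently, ⟨f̂, g⟩ ≤ ⟨f, g⟩ for all DER data g, where f̂ is the single-term DER data ((â, {Â})). -/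
open scoped InnerProductSpace

noncomputable section

/-- Property (der2) (round-sphere case): for every DER data `f` there exist `â ∈ [0,1]` and a
unit vector `Â` such that `⟨f̂, g⟩ ≤ ⟨f, g⟩` for all DER data `g`, where
`f̂ = ((â, {Â}))`, i.e. `⟨f̂, g⟩ = ∑_β â b_β sup_{b ∈ B_β} ⟪Â, b⟫`. -/
theorem stmt_5 (n : ℕ) (hn : 2 ≤ n) (f : DERData n) :
    ∃ a : ℝ, a ∈ Set.Icc (0 : ℝ) 1 ∧ ∃ Ahat : EuclideanSpace ℝ (Fin n), ‖Ahat‖ = 1 ∧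
      ∀ g : DERData n,
        (∑ β, a * g.w β * sSup ((fun b => ⟪Ahat, b⟫_ℝ) '' g.A β)) ≤ f.sprod g := by
  classical
  -- choose a point in each A_α
  obtain ⟨pt, hpt⟩ : ∃ pt : Fin f.m → EuclideanSpace ℝ (Fin n), ∀ α, pt α ∈ f.A α :=
    ⟨fun α => (f.nonempty' α).choose, fun α => (f.nonempty' α).choose_spec⟩
  have hnormpt : ∀ α, ‖pt α‖ = 1 := fun α => by
    have := f.subset_sphere α (hpt α)
    simpa using this
  set v : EuclideanSpace ℝ (Fin n) := ∑ α, f.w α • pt α with hv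
  have hva : ‖v‖ ≤ 1 := by
    calc ‖v‖ ≤ ∑ α, ‖f.w α • pt α‖ := norm_sum_le _ _
      _ = ∑ α, f.w α := by
          simp [norm_smul, hnormpt, abs_of_nonneg (f.nonneg _)]
      _ ≤ 1 := f.sum_le_one
  obtain ⟨a, ha0, hav, Ahat, hAnorm, hvA⟩ :
      ∃ a : ℝ, 0 ≤ a ∧ a ≤ ‖v‖ ∧ ∃ Ahat, ‖Ahat‖ = 1 ∧ v = a • Ahat := by
    by_cases h : v = 0
    · refine ⟨0, le_refl 0, by positivity, EuclideanSpace.single ⟨0, by omega⟩ (1:ℝ), ?_, by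
        simp [h]⟩
      simp [EuclideanSpace.norm_single]
    · refine ⟨‖v‖, norm_nonneg _, le_refl _, ‖v‖⁻¹ • v, ?_, ?_⟩
      · rw [norm_smul, norm_inv, norm_norm, inv_mul_cancel₀ (norm_ne_zero_iff.2 h)]
      · rw [smul_smul, mul_inv_cancel₀ (norm_ne_zero_iff.2 h), one_smul]
  refine ⟨a, ⟨ha0, hav.trans hva⟩, Ahat, hAnorm, ?_⟩
  intro g
  rw [DERData.sprod, Finset.sum_comm]
  apply Finset.sum_le_sum
  intro β _
  -- per β inequality
  have hBc : IsCompact (g.A β) := g.compact' β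
  have hBne : (g.A β).Nonempty := g.nonempty' β
  have hcont : ContinuousOn (fun b => ⟪Ahat, b⟫_ℝ) (g.A β) :=
    (continuous_const.inner continuous_id).continuousOn
  obtain ⟨b₀, hb₀, hsup⟩ := hBc.exists_sSup_image_eq hBne hcont
  rw [hsup]
  -- bound each summand's sSup from below by the value at (pt α, b₀)
  have hnormB : ∀ b ∈ g.A β, ‖b‖ = 1 := fun b hb => by
    have := g.subset_sphere β hb
    simpa using this
  have key : ∀ α, ⟪pt α, b₀⟫_ℝ ≤ sSup (Set.image2 (fun a b => ⟪a, b⟫_ℝ) (f.A α) (g.A β)) := by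
    intro α
    apply le_csSup
    · refine ⟨1, ?_⟩
      rintro x ⟨p, hp, q, hq, rfl⟩
      calc ⟪p, q⟫_ℝ ≤ ‖p‖ * ‖q‖ := real_inner_le_norm p q
        _ = 1 := by
            have h1 : ‖p‖ = 1 := by simpa using f.subset_sphere α hp
            rw [h1, hnormB q hq, one_mul]
    · exact ⟨pt α, hpt α, b₀, hb₀, rfl⟩
  have hvb : a * ⟪Ahat, b₀⟫_ℝ = ∑ α, f.w α * ⟪pt α, b₀⟫_ℝ := by
    have : ⟪v, b₀⟫_ℝ = ∑ α, f.w α * ⟪pt α, b₀⟫_ℝ := by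
      rw [hv, sum_inner]
      exact Finset.sum_congr rfl fun α _ => real_inner_smul_left (pt α) b₀ (f.w α)
    rw [hvA] at this
    rw [← this, real_inner_smul_left]
  calc a * g.w β * ⟪Ahat, b₀⟫_ℝ = g.w β * (a * ⟪Ahat, b₀⟫_ℝ) := by ring
    _ = g.w β * ∑ α, f.w α * ⟪pt α, b₀⟫_ℝ := by rw [hvb]
    _ = ∑ α, f.w α * g.w β * ⟪pt α, b₀⟫_ℝ := by rw [Finset.mul_sum]; congr 1; ext α; ring
    _ ≤ ∑ α, f.w α * g.w β * sSup (Set.image2 (fun a b => ⟪a, b⟫_ℝ) (f.A α) (g.A β)) := by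
        apply Finset.sum_le_sum
        intro α _
        exact mul_le_mul_of_nonneg_left (key α)
          (mul_nonneg (f.nonneg α) (g.nonneg β))

end
end

section
/- Let n ≥ 2, ε ∈ (0,1), and let f be DER data on the unit sphere S^{n−1} ⊆ ℝⁿ whose DER function satisfies sup_{x ∈ S^{n−1}} f(x) > ε. Then there exist â ∈ (ε, 1] and Â ∈ S^{n−1} such that â · g(Â) ≥ −⟨f, g⟩ for every DER data g on S^{n−1}. In particular, for every δ > 0, every DER data g with ⟨f, g⟩ < δ satisfies g(Â) > −δ/ε. -/
open scoped InnerProductSpace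

noncomputable section

/-- Key step in the induction of Lemma 5.1 (round-sphere case): if `max f > ε` then the
element `f̂ = -â cos d(Â, ·)` from (der2) has `â > ε`, and `â·g(Â) ≥ -⟨f, g⟩` for every DER
data `g`; in particular `⟨f, g⟩ < δ` implies `g(Â) > -δ/ε`. -/
theorem stmt_6 (n : ℕ) (hn : 2 ≤ n) (ε : ℝ) (hε : ε ∈ Set.Ioo (0 : ℝ) 1)
    (f : DERData n)
    (hf : ε < sSup (f.toFun '' Metric.sphere (0 : EuclideanSpace ℝ (Fin n)) 1)) :
    ∃ a : ℝ, ε < a ∧ a ≤ 1 ∧ ∃ Ahat : EuclideanSpace ℝ (Fin n), ‖Ahat‖ = 1 ∧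
      (∀ g : DERData n, -(f.sprod g) ≤ a * g.toFun Ahat) ∧
      (∀ δ : ℝ, 0 < δ → ∀ g : DERData n, f.sprod g < δ → -(δ / ε) < g.toFun Ahat) := by
  -- a point on the sphere where f exceeds ε
  have hx0 : ∃ x₀ ∈ Metric.sphere (0 : EuclideanSpace ℝ (Fin n)) 1, ε < f.toFun x₀ := by
    by_contra h
    push_neg at h
    have hne : (f.toFun '' Metric.sphere (0 : EuclideanSpace ℝ (Fin n)) 1).Nonempty := by
      refine ⟨f.toFun (EuclideanSpace.single (⟨0, by omega⟩ : Fin n) (1 : ℝ)), ⟨_, ?_, rfl⟩⟩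
      simp [mem_sphere_zero_iff_norm, EuclideanSpace.norm_single]
    have hle := csSup_le hne (by rintro s ⟨x, hx, rfl⟩; exact h x hx)
    linarith
  obtain ⟨x₀, hx₀s, hx₀⟩ := hx0
  have hx₀n : ‖x₀‖ = 1 := mem_sphere_zero_iff_norm.mp hx₀s
  choose a ha using f.nonempty'
  have han : ∀ α, ‖a α‖ = 1 := fun α =>
    mem_sphere_zero_iff_norm.mp (f.subset_sphere α (ha α))
  set v := ∑ α, f.w α • a α with hv
  -- boundedness of the relevant sup sets
  have hbdd : ∀ α, BddAbove ((fun y => ⟪y, x₀⟫_ℝ) '' f.A α) := by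
    intro α
    refine ⟨1, ?_⟩
    rintro s ⟨y, hy, rfl⟩
    have hyn : ‖y‖ = 1 := mem_sphere_zero_iff_norm.mp (f.subset_sphere α hy)
    calc ⟪y, x₀⟫_ℝ ≤ ‖y‖ * ‖x₀‖ := real_inner_le_norm _ _
      _ = 1 := by rw [hyn, hx₀n]; ring
  have hvx : ⟪v, x₀⟫_ℝ ≤ ∑ α, f.w α * sSup ((fun y => ⟪y, x₀⟫_ℝ) '' f.A α) := by
    rw [hv, sum_inner]
    refine Finset.sum_le_sum fun α _ => ?_
    rw [real_inner_smul_left]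
    exact mul_le_mul_of_nonneg_left (le_csSup (hbdd α) ⟨a α, ha α, rfl⟩) (f.nonneg α)
  have hεv : ε < -⟪v, x₀⟫_ℝ := by
    unfold DERData.toFun at hx₀
    linarith
  have hvnorm : ε < ‖v‖ := by
    have h1 : |⟪v, x₀⟫_ℝ| ≤ ‖v‖ * ‖x₀‖ := abs_real_inner_le_norm v x₀
    rw [hx₀n, mul_one] at h1
    have := neg_abs_le (⟪v, x₀⟫_ℝ)
    linarith
  have hv1 : ‖v‖ ≤ 1 := by
    calc ‖v‖ ≤ ∑ α, ‖f.w α • a α‖ := norm_sum_le _ _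
      _ = ∑ α, f.w α := by
          refine Finset.sum_congr rfl fun α _ => ?_
          rw [norm_smul, han, mul_one, Real.norm_eq_abs, abs_of_nonneg (f.nonneg α)]
      _ ≤ 1 := f.sum_le_one
  have hvpos : (0 : ℝ) < ‖v‖ := lt_trans hε.1 hvnorm
  have hv0 : v ≠ 0 := by
    intro h; rw [h, norm_zero] at hvpos; exact lt_irrefl 0 hvpos
  have hmain : ∀ g : DERData n, -(f.sprod g) ≤ ‖v‖ * g.toFun (‖v‖⁻¹ • v) := by
    intro g
    have hβ : ∀ β, ‖v‖ * sSup ((fun b => ⟪b, ‖v‖⁻¹ • v⟫_ℝ) '' g.A β) ≤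
        ∑ α, f.w α * sSup (Set.image2 (fun x y => ⟪x, y⟫_ℝ) (f.A α) (g.A β)) := by
      intro β
      set C := ∑ α, f.w α * sSup (Set.image2 (fun x y => ⟪x, y⟫_ℝ) (f.A α) (g.A β)) with hC
      have hsup : sSup ((fun b => ⟪b, ‖v‖⁻¹ • v⟫_ℝ) '' g.A β) ≤ ‖v‖⁻¹ * C := by
        refine csSup_le ((g.nonempty' β).image _) ?_
        rintro s ⟨b, hb, rfl⟩
        have hbn : ‖b‖ = 1 := mem_sphere_zero_iff_norm.mp (g.subset_sphere β hb)
        have hbv : ⟪b, v⟫_ℝ ≤ C := by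
          rw [hv, inner_sum]
          refine Finset.sum_le_sum fun α _ => ?_
          rw [real_inner_smul_right]
          refine mul_le_mul_of_nonneg_left ?_ (f.nonneg α)
          refine le_csSup ?_ ?_
          · refine ⟨1, ?_⟩
            rintro s ⟨x, hx, y, hy, rfl⟩
            have hxn : ‖x‖ = 1 := mem_sphere_zero_iff_norm.mp (f.subset_sphere α hx)
            have hyn : ‖y‖ = 1 := mem_sphere_zero_iff_norm.mp (g.subset_sphere β hy)
            calc ⟪x, y⟫_ℝ ≤ ‖x‖ * ‖y‖ := real_inner_le_norm _ _
              _ = 1 := by rw [hxn, hyn]; ring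
          · rw [real_inner_comm]
            exact Set.mem_image2_of_mem (ha α) hb
        calc ⟪b, ‖v‖⁻¹ • v⟫_ℝ = ‖v‖⁻¹ * ⟪b, v⟫_ℝ := real_inner_smul_right _ _ _
          _ ≤ ‖v‖⁻¹ * C := mul_le_mul_of_nonneg_left hbv (by positivity)
      calc ‖v‖ * sSup ((fun b => ⟪b, ‖v‖⁻¹ • v⟫_ℝ) '' g.A β)
          ≤ ‖v‖ * (‖v‖⁻¹ * C) := mul_le_mul_of_nonneg_left hsup (norm_nonneg v)
        _ = C := by field_simp
    have key : ∑ β, g.w β * (‖v‖ * sSup ((fun b => ⟪b, ‖v‖⁻¹ • v⟫_ℝ) '' g.A β)) ≤ f.sprod g := by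
      calc ∑ β, g.w β * (‖v‖ * sSup ((fun b => ⟪b, ‖v‖⁻¹ • v⟫_ℝ) '' g.A β))
          ≤ ∑ β, g.w β * ∑ α, f.w α * sSup (Set.image2 (fun x y => ⟪x, y⟫_ℝ) (f.A α) (g.A β)) :=
            Finset.sum_le_sum fun β _ => mul_le_mul_of_nonneg_left (hβ β) (g.nonneg β)
        _ = f.sprod g := by
            rw [DERData.sprod, Finset.sum_comm]
            refine Finset.sum_congr rfl fun β _ => ?_
            rw [Finset.mul_sum]
            refine Finset.sum_congr rfl fun α _ => ?_
            ring
    have hrw : ‖v‖ * g.toFun (‖v‖⁻¹ • v) =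
        -∑ β, g.w β * (‖v‖ * sSup ((fun b => ⟪b, ‖v‖⁻¹ • v⟫_ℝ) '' g.A β)) := by
      unfold DERData.toFun
      rw [mul_neg, Finset.mul_sum]
      congr 1
      refine Finset.sum_congr rfl fun β _ => ?_
      ring
    rw [hrw]
    linarith
  refine ⟨‖v‖, hvnorm, hv1, ‖v‖⁻¹ • v, norm_smul_inv_norm hv0, hmain, ?_⟩
  intro δ hδ g hg
  have h1 : -δ < ‖v‖ * g.toFun (‖v‖⁻¹ • v) := by
    have := hmain g; linarith
  rcases le_or_gt 0 (g.toFun (‖v‖⁻¹ • v)) with h2 | h2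
  · have : 0 < δ / ε := div_pos hδ hε.1
    linarith
  · have h3 : ‖v‖ * g.toFun (‖v‖⁻¹ • v) ≤ ε * g.toFun (‖v‖⁻¹ • v) := by nlinarith
    have h4 : -(g.toFun (‖v‖⁻¹ • v)) < δ / ε := by
      rw [lt_div_iff₀ hε.1]; nlinarith
    linarith

end
end

section
/- Let n ≥ 3, let f = ((a_α, A_α))_{α=1}^m and g = ((b_β, B_β))_{β=1}^{m'} be DER data on the unit sphere S^{n−1} ⊆ ℝⁿ, and let p ∈ S^{n−1} satisfy 0 < d(A_α, p) < π and 0 < d(B_β, p) < π for all α, β. For a nonempty compact A ⊆ S^{n−1} with 0 < d(A,p) < π, let A′_p := {(a − ⟨a,p⟩p)/‖a − ⟨a,p⟩p‖ : a ∈ A, d(a,p) = d(A,p)}, a nonempty compact subset of the unit sphere Σ_p of the orthogonal complement of p. Define the differential data f′_p := ((a_α · sin d(A_α,p), (A_α)′_p))_α and g′_p := ((b_β · sin d(B_β,p), (B_β)′_p))_β, which are DER data on Σ_p. Then ⟨f′_p, g′_p⟩ ≤ ⟨f, g⟩ − f(p)·g(p), where the scalar product of data on Σ_p is given by the same formula Σ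 weights times sup of inner products of pairs from the sets. -/
open scoped InnerProductSpace

noncomputable section

/-- `cos d(A, x) = sup_{a ∈ A} ⟪a, x⟫` for a set `A` on the sphere. -/
def cosSet {n : ℕ} (A : Set (EuclideanSpace ℝ (Fin n))) (x : EuclideanSpace ℝ (Fin n)) : ℝ :=
  sSup ((fun a => ⟪a, x⟫_ℝ) '' A)

/-- The angular distance `d(A, x) = inf_{a ∈ A} arccos ⟪a, x⟫ = arccos (cos d(A, x))`. -/
def distSet {n : ℕ} (A : Set (EuclideanSpace ℝ (Fin n))) (x : EuclideanSpace ℝ (Fin n)) : ℝ :=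
  Real.arccos (cosSet A x)

/-- The set `A′_p` of directions at `p` of shortest paths from `p` to `A`: the normalized
tangential components of the points of `A` nearest to `p`. -/
def dirSet {n : ℕ} (A : Set (EuclideanSpace ℝ (Fin n))) (p : EuclideanSpace ℝ (Fin n)) :
    Set (EuclideanSpace ℝ (Fin n)) :=
  (fun a => ‖a - ⟪a, p⟫_ℝ • p‖⁻¹ • (a - ⟪a, p⟫_ℝ • p)) ''
    {a ∈ A | Real.arccos ⟪a, p⟫_ℝ = distSet A p}

/-! Decompose unit vectors as `a = cos θ • p + sin θ • u` with `u ⊥ p` a unit tangent direction.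
Then `⟪a, b⟫ = sin θ_a sin θ_b ⟪u, v⟫ + cos θ_a cos θ_b` is the spherical law of cosines. For
`a ∈ A`, `b ∈ B` nearest to `p` we have `θ_a = d(A, p)`, `cos θ_a = cos d(A, p)`, and `⟪a, b⟫` is at
most `cos d(A, B)`; so each `(α, β)` term of `⟨f′_p, g′_p⟩ + f(p) g(p)` is bounded by the
corresponding term of `⟨f, g⟩`. -/

open Real Set

section InnerProductSpace

variable {F : Type*} [NormedAddCommGroup F] [InnerProductSpace ℝ F]

lemma norm_mul_norm_mul_inner_inv_smul (u v : F) :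
    ‖u‖ * ‖v‖ * ⟪‖u‖⁻¹ • u, ‖v‖⁻¹ • v⟫_ℝ = ⟪u, v⟫_ℝ := by
  rcases eq_or_ne u 0 with rfl | hu
  · simp
  rcases eq_or_ne v 0 with rfl | hv
  · simp
  rw [real_inner_smul_left, real_inner_smul_right]
  field_simp

variable {p : F}

lemma inner_sub_inner_smul_sub_inner_smul (hp : ‖p‖ = 1) (a b : F) :
    ⟪a - ⟪a, p⟫_ℝ • p, b - ⟪b, p⟫_ℝ • p⟫_ℝ = ⟪a, b⟫_ℝ - ⟪a, p⟫_ℝ * ⟪b, p⟫_ℝ := by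
  simp only [inner_sub_left, inner_sub_right, real_inner_smul_left, real_inner_smul_right,
    real_inner_self_eq_norm_sq, hp, real_inner_comm p]
  ring

lemma norm_sub_inner_smul_eq_sin_arccos (hp : ‖p‖ = 1) {a : F} (ha : ‖a‖ = 1) :
    ‖a - ⟪a, p⟫_ℝ • p‖ = sin (arccos ⟪a, p⟫_ℝ) := by
  have h := inner_sub_inner_smul_sub_inner_smul hp a a
  rw [real_inner_self_eq_norm_sq, real_inner_self_eq_norm_sq, ha] at h
  rw [sin_arccos, ← sqrt_sq (norm_nonneg (a - _)), h]
  ring_nf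

/-- The direction at `p` of the great circle towards `a`. For `a = ±p` the junk value `0⁻¹ = 0`
makes it `0`; `spherical_law_cos` still holds there, since then `sin (arccos ⟪a, p⟫) = 0`. -/
def tangentDir (p a : F) : F :=
  ‖a - ⟪a, p⟫_ℝ • p‖⁻¹ • (a - ⟪a, p⟫_ℝ • p)

theorem spherical_law_cos (hp : ‖p‖ = 1) {a b : F} (ha : ‖a‖ = 1) (hb : ‖b‖ = 1) :
    sin (arccos ⟪a, p⟫_ℝ) * sin (arccos ⟪b, p⟫_ℝ) * ⟪tangentDir p a, tangentDir p b⟫_ℝ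
      + ⟪a, p⟫_ℝ * ⟪b, p⟫_ℝ = ⟪a, b⟫_ℝ := by
  rw [← norm_sub_inner_smul_eq_sin_arccos hp ha, ← norm_sub_inner_smul_eq_sin_arccos hp hb,
    tangentDir, tangentDir, norm_mul_norm_mul_inner_inv_smul,
    inner_sub_inner_smul_sub_inner_smul hp]
  ring

end InnerProductSpace

section Sphere

variable {n : ℕ} {A B : Set (EuclideanSpace ℝ (Fin n))} {p : EuclideanSpace ℝ (Fin n)}

lemma bddAbove_image2_inner (hA : A ⊆ Metric.sphere 0 1) (hB : B ⊆ Metric.sphere 0 1) :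
    BddAbove (image2 (fun a b => ⟪a, b⟫_ℝ) A B) :=
  ⟨1, by
    rintro _ ⟨a, ha, b, hb, rfl⟩
    exact real_inner_le_one_of_norm_eq_one (mem_sphere_zero_iff_norm.1 (hA ha))
      (mem_sphere_zero_iff_norm.1 (hB hb))⟩

lemma inner_le_cosSet (hA : A ⊆ Metric.sphere 0 1) (hp : ‖p‖ = 1) {a : EuclideanSpace ℝ (Fin n)}
    (ha : a ∈ A) : ⟪a, p⟫_ℝ ≤ cosSet A p := by
  have hbdd := bddAbove_image2_inner hA (singleton_subset_iff.2 (mem_sphere_zero_iff_norm.2 hp))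
  rw [image2_singleton_right] at hbdd
  exact le_csSup hbdd (mem_image_of_mem _ ha)

lemma cosSet_le_one (hA₀ : A.Nonempty) (hA : A ⊆ Metric.sphere 0 1) (hp : ‖p‖ = 1) :
    cosSet A p ≤ 1 :=
  csSup_le (hA₀.image _) <| forall_mem_image.2 fun _ ha =>
    real_inner_le_one_of_norm_eq_one (mem_sphere_zero_iff_norm.1 (hA ha)) hp

lemma exists_mem_inner_eq_cosSet (hA₀ : A.Nonempty) (hAc : IsCompact A)
    (hA : A ⊆ Metric.sphere 0 1) (hp : ‖p‖ = 1) : ∃ a ∈ A, ⟪a, p⟫_ℝ = cosSet A p := by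
  obtain ⟨a, ha, hmax⟩ :=
    hAc.exists_isMaxOn hA₀ (continuous_id.inner (𝕜 := ℝ) continuous_const).continuousOn
  exact ⟨a, ha, le_antisymm (inner_le_cosSet hA hp ha)
    (csSup_le (hA₀.image _) (forall_mem_image.2 hmax))⟩

lemma inner_eq_cosSet_of_arccos_eq (hA : A ⊆ Metric.sphere 0 1) (hp : ‖p‖ = 1)
    {a : EuclideanSpace ℝ (Fin n)} (ha : a ∈ A) (hd : arccos ⟪a, p⟫_ℝ = distSet A p) :
    ⟪a, p⟫_ℝ = cosSet A p := by
  have ha₁ := mem_sphere_zero_iff_norm.1 (hA ha)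
  exact arccos_injOn (real_inner_mem_Icc_of_norm_eq_one ha₁ hp)
    ⟨(neg_one_le_real_inner_of_norm_eq_one ha₁ hp).trans (inner_le_cosSet hA hp ha),
      cosSet_le_one ⟨a, ha⟩ hA hp⟩ hd

lemma dirSet_nonempty (hA₀ : A.Nonempty) (hAc : IsCompact A) (hA : A ⊆ Metric.sphere 0 1)
    (hp : ‖p‖ = 1) : (dirSet A p).Nonempty := by
  obtain ⟨a, ha, hcos⟩ := exists_mem_inner_eq_cosSet hA₀ hAc hA hp
  exact ⟨_, a, ⟨ha, congrArg arccos hcos⟩, rfl⟩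

theorem sin_mul_sin_mul_sSup_inner_dirSet_add_le (hA₀ : A.Nonempty)
    (hAc : IsCompact A) (hA : A ⊆ Metric.sphere 0 1) (hB₀ : B.Nonempty) (hBc : IsCompact B)
    (hB : B ⊆ Metric.sphere 0 1) (hp : ‖p‖ = 1) :
    sin (distSet A p) * sin (distSet B p) *
        sSup (image2 (fun a b => ⟪a, b⟫_ℝ) (dirSet A p) (dirSet B p))
      + cosSet A p * cosSet B p ≤ sSup (image2 (fun a b => ⟪a, b⟫_ℝ) A B) := by
  have hs : 0 ≤ sin (distSet A p) * sin (distSet B p) := by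
    simp only [distSet, sin_arccos]
    positivity
  rw [← le_sub_iff_add_le, ← smul_eq_mul, ← Real.sSup_smul_of_nonneg hs]
  refine csSup_le (((dirSet_nonempty hA₀ hAc hA hp).image2
    (dirSet_nonempty hB₀ hBc hB hp)).smul_set) ?_
  rintro _ ⟨_, ⟨_, ⟨a, ⟨ha, hda⟩, rfl⟩, _, ⟨b, ⟨hb, hdb⟩, rfl⟩, rfl⟩, rfl⟩
  change _ * ⟪tangentDir p a, tangentDir p b⟫_ℝ ≤ _
  rw [le_sub_iff_add_le, ← hda, ← hdb, ← inner_eq_cosSet_of_arccos_eq hA hp ha hda,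
    ← inner_eq_cosSet_of_arccos_eq hB hp hb hdb,
    spherical_law_cos hp (mem_sphere_zero_iff_norm.1 (hA ha)) (mem_sphere_zero_iff_norm.1 (hB hb))]
  exact le_csSup (bddAbove_image2_inner hA hB) (mem_image2_of_mem ha hb)

end Sphere

theorem stmt_7_general (n : ℕ) (f g : DERData n)
    (p : EuclideanSpace ℝ (Fin n)) (hp : ‖p‖ = 1) :
    (∑ α, ∑ β, (f.w α * Real.sin (distSet (f.A α) p)) *
        (g.w β * Real.sin (distSet (g.A β) p)) *
        sSup (Set.image2 (fun a b => ⟪a, b⟫_ℝ) (dirSet (f.A α) p) (dirSet (g.A β) p)))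
      ≤ f.sprod g - f.toFun p * g.toFun p := by
  have hfg : f.toFun p * g.toFun p =
      ∑ α, ∑ β, f.w α * g.w β * (cosSet (f.A α) p * cosSet (g.A β) p) := by
    simp only [DERData.toFun, neg_mul_neg, Finset.sum_mul_sum, cosSet]
    exact Finset.sum_congr rfl fun α _ => Finset.sum_congr rfl fun β _ => by ring
  rw [DERData.sprod, hfg, ← Finset.sum_sub_distrib]
  refine Finset.sum_le_sum fun α _ => ?_
  rw [← Finset.sum_sub_distrib]
  refine Finset.sum_le_sum fun β _ => ?_
  have key := sin_mul_sin_mul_sSup_inner_dirSet_add_le (f.nonempty' α) (f.compact' α)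
    (f.subset_sphere α) (g.nonempty' β) (g.compact' β) (g.subset_sphere β) hp
  have := mul_le_mul_of_nonneg_left key (mul_nonneg (f.nonneg α) (g.nonneg β))
  linarith

/-- Property (der1) (round-sphere case): `⟨f′_p, g′_p⟩ ≤ ⟨f, g⟩ - f(p)·g(p)`, where
`f′_p = ((a_α sin d(A_α,p), (A_α)′_p))_α` and `g′_p = ((b_β sin d(B_β,p), (B_β)′_p))_β`
are the differentials of `f` and `g` at `p`, DER data on the unit sphere `Σ_p` of `p^⊥`. -/
theorem stmt_7 (n : ℕ) (hn : 3 ≤ n) (f g : DERData n)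
    (p : EuclideanSpace ℝ (Fin n)) (hp : ‖p‖ = 1)
    (hf : ∀ α, 0 < distSet (f.A α) p ∧ distSet (f.A α) p < Real.pi)
    (hg : ∀ β, 0 < distSet (g.A β) p ∧ distSet (g.A β) p < Real.pi) :
    (∑ α, ∑ β, (f.w α * Real.sin (distSet (f.A α) p)) *
        (g.w β * Real.sin (distSet (g.A β) p)) *
        sSup (Set.image2 (fun a b => ⟪a, b⟫_ℝ) (dirSet (f.A α) p) (dirSet (g.A β) p)))
      ≤ f.sprod g - f.toFun p * g.toFun p :=
  stmt_7_general n f g p hp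

end
end

section
/- For every integer n ≥ 2 and every ε ∈ (0,1) there exist δ > 0 and c > 0 (depending only on n and ε) with the following property: for every k ≤ n, if f₁, …, f_{k+1} are DER data on the unit sphere S^{n−1} ⊆ ℝⁿ with ⟨f₁, f_i⟩ < −ε for all 2 ≤ i ≤ k+1 and ⟨f_i, f_j⟩ < δ for all 2 ≤ i ≠ j ≤ k+1, then the set X := {x ∈ S^{n−1} : f₁(x) ≥ c and f_i(x) ≥ 0 for all 3 ≤ i ≤ k+1} is nonempty. -/
open scoped InnerProductSpace

noncomputable section

namespace Stmt8Aux

variable {n : ℕ}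

/-- The "body" of a DER datum. -/
def K (g : DERData n) : Set (EuclideanSpace ℝ (Fin n)) :=
  {y | ∃ q : Fin g.m → EuclideanSpace ℝ (Fin n), (∀ β, q β ∈ g.A β) ∧ y = ∑ β, g.w β • q β}

lemma K_nonempty (g : DERData n) : (K g).Nonempty := by
  choose q hq using g.nonempty'
  exact ⟨_, q, hq, rfl⟩

lemma norm_le_one_of_mem_K (g : DERData n) {y} (hy : y ∈ K g) : ‖y‖ ≤ 1 := by
  obtain ⟨q, hq, rfl⟩ := hy
  calc ‖∑ β, g.w β • q β‖ ≤ ∑ β, ‖g.w β • q β‖ := norm_sum_le _ _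
    _ = ∑ β, g.w β := by
        refine Finset.sum_congr rfl fun β _ => ?_
        rw [norm_smul, Real.norm_of_nonneg (g.nonneg β),
          mem_sphere_zero_iff_norm.1 (g.subset_sphere β (hq β)), mul_one]
    _ ≤ 1 := g.sum_le_one

lemma inner_le_sprod (f g : DERData n) {u y} (hu : u ∈ K f) (hy : y ∈ K g) :
    ⟪u, y⟫_ℝ ≤ f.sprod g := by
  obtain ⟨p, hp, rfl⟩ := hu
  obtain ⟨q, hq, rfl⟩ := hy
  rw [sum_inner]
  unfold DERData.sprod
  refine Finset.sum_le_sum fun α _ => ?_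
  rw [real_inner_smul_left, inner_sum, Finset.mul_sum]
  refine Finset.sum_le_sum fun β _ => ?_
  rw [real_inner_smul_right]
  have hb : BddAbove (Set.image2 (fun a b => ⟪a, b⟫_ℝ) (f.A α) (g.A β)) := by
    refine ⟨1, ?_⟩
    rintro z ⟨a, ha, b, hb, rfl⟩
    calc ⟪a, b⟫_ℝ ≤ ‖a‖ * ‖b‖ := real_inner_le_norm a b
      _ = 1 := by
        rw [mem_sphere_zero_iff_norm.1 (f.subset_sphere α ha),
          mem_sphere_zero_iff_norm.1 (g.subset_sphere β hb), mul_one]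
  have hle : ⟪p α, q β⟫_ℝ ≤ sSup (Set.image2 (fun a b => ⟪a, b⟫_ℝ) (f.A α) (g.A β)) :=
    le_csSup hb (Set.mem_image2_of_mem (hp α) (hq β))
  have hw : 0 ≤ f.w α * g.w β := mul_nonneg (f.nonneg α) (g.nonneg β)
  calc f.w α * (g.w β * ⟪p α, q β⟫_ℝ) = f.w α * g.w β * ⟪p α, q β⟫_ℝ := by ring
    _ ≤ _ := mul_le_mul_of_nonneg_left hle hw

lemma exists_rep (g : DERData n) (x : EuclideanSpace ℝ (Fin n)) :
    ∃ u ∈ K g, g.toFun x = -⟪u, x⟫_ℝ := by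
  have h : ∀ β, ∃ p ∈ g.A β, ∀ a ∈ g.A β, ⟪a, x⟫_ℝ ≤ ⟪p, x⟫_ℝ := by
    intro β
    have hcont : Continuous (fun a : EuclideanSpace ℝ (Fin n) => ⟪a, x⟫_ℝ) :=
      continuous_id.inner continuous_const
    obtain ⟨p, hp, hmax⟩ := (g.compact' β).exists_isMaxOn (g.nonempty' β) hcont.continuousOn
    exact ⟨p, hp, fun a ha => hmax ha⟩
  choose p hp hmax using h
  refine ⟨∑ β, g.w β • p β, ⟨p, hp, rfl⟩, ?_⟩
  unfold DERData.toFun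
  congr 1
  rw [sum_inner]
  refine Finset.sum_congr rfl fun β _ => ?_
  rw [real_inner_smul_left]
  congr 1
  refine IsGreatest.csSup_eq ⟨⟨p β, hp β, rfl⟩, ?_⟩
  rintro z ⟨a, ha, rfl⟩
  exact hmax β a ha

lemma cone_add {D : Set (EuclideanSpace ℝ (Fin n))} (hD : Convex ℝ D) {z z' : EuclideanSpace ℝ (Fin n)}
    (hz : z ∈ D) (hz' : z' ∈ D) {t t' : ℝ} (ht : 0 ≤ t) (ht' : 0 ≤ t') :
    ∃ (s : ℝ) (w : EuclideanSpace ℝ (Fin n)), 0 ≤ s ∧ w ∈ D ∧ t • z + t' • z' = s • w := by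
  rcases eq_or_lt_of_le (add_nonneg ht ht') with h | h
  · have h1 : t = 0 := by linarith
    have h2 : t' = 0 := by linarith
    exact ⟨0, z, le_rfl, hz, by simp [h1, h2]⟩
  · refine ⟨t + t', (t / (t + t')) • z + (t' / (t + t')) • z', h.le,
      hD hz hz' (div_nonneg ht h.le) (div_nonneg ht' h.le) (by field_simp), ?_⟩
    have e1 : (t + t') * (t / (t + t')) = t := by field_simp
    have e2 : (t + t') * (t' / (t + t')) = t' := by field_simp
    rw [smul_add, smul_smul, smul_smul, e1, e2]

set_option maxHeartbeats 1000000 in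
lemma geom (k : ℕ) (hn : 2 ≤ n) (hk1 : 1 ≤ k)
    (ε : ℝ) (hε0 : 0 < ε)
    (S : Fin (k+1) → Set (EuclideanSpace ℝ (Fin n)))
    (hne : ∀ i, (S i).Nonempty)
    (hball : ∀ i, ∀ y ∈ S i, ‖y‖ ≤ 1)
    (h0 : ∀ i : Fin (k+1), 1 ≤ (i:ℕ) → ∀ u ∈ S 0, ∀ y ∈ S i, ⟪u, y⟫_ℝ ≤ -ε)
    (hij : ∀ i j : Fin (k+1), 1 ≤ (i:ℕ) → 1 ≤ (j:ℕ) → i ≠ j →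
      ∀ y ∈ S i, ∀ y' ∈ S j, ⟪y, y'⟫_ℝ ≤ ε^2/(4*n)) :
    ∃ x : EuclideanSpace ℝ (Fin n), ‖x‖ = 1 ∧ (∀ u ∈ S 0, ⟪u, x⟫_ℝ ≤ -(ε/2)) ∧
      ∀ i : Fin (k+1), 2 ≤ (i:ℕ) → ∀ y ∈ S i, ⟪y, x⟫_ℝ ≤ 0 := by
  set δ : ℝ := ε^2/(4*n) with hδdef
  have hN : (2:ℝ) ≤ (n:ℝ) := by exact_mod_cast hn
  have hδpos : 0 < δ := by
    apply div_pos (by positivity); linarith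
  set D : Fin (k+1) → Set (EuclideanSpace ℝ (Fin n)) := fun i => convexHull ℝ (S i) with hDdef
  have hDconv : ∀ i, Convex ℝ (D i) := fun i => convex_convexHull ℝ _
  have hDne : ∀ i, (D i).Nonempty := fun i => (hne i).mono (subset_convexHull ℝ _)
  -- halfspace extension of inner-product bounds to hulls
  have hull_le : ∀ (u : EuclideanSpace ℝ (Fin n)) (r : ℝ) (T : Set (EuclideanSpace ℝ (Fin n))),
      (∀ y ∈ T, ⟪u, y⟫_ℝ ≤ r) → ∀ y ∈ convexHull ℝ T, ⟪u, y⟫_ℝ ≤ r := by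
    intro u r T hT y hy
    have hconv : Convex ℝ {y : EuclideanSpace ℝ (Fin n) | ⟪u, y⟫_ℝ ≤ r} := by
      intro a ha b hb s t hs ht hst
      simp only [Set.mem_setOf_eq, inner_add_right, real_inner_smul_right] at ha hb ⊢
      have hr : s*r + t*r = r := by rw [← add_mul, hst, one_mul]
      nlinarith [mul_le_mul_of_nonneg_left ha hs, mul_le_mul_of_nonneg_left hb ht]
    exact convexHull_min hT hconv hy
  have hD0 : ∀ i : Fin (k+1), 1 ≤ (i:ℕ) → ∀ u ∈ S 0, ∀ y ∈ D i, ⟪u, y⟫_ℝ ≤ -ε :=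
    fun i hi u hu => hull_le u (-ε) (S i) (h0 i hi u hu)
  have one_lt : 1 < k + 1 := by omega
  set i1 : Fin (k+1) := ⟨1, one_lt⟩ with hi1
  have hi1v : (i1:ℕ) = 1 := rfl
  have hDij1 : ∀ j : Fin (k+1), 2 ≤ (j:ℕ) → ∀ v ∈ D i1, ∀ y ∈ D j, ⟪v, y⟫_ℝ ≤ δ := by
    intro j hj v hv y hy
    have hne1j : i1 ≠ j := by
      intro h
      rw [← h, hi1v] at hj
      omega
    -- first hull in v, then in y
    have step1 : ∀ v' ∈ S i1, ∀ y' ∈ D j, ⟪v', y'⟫_ℝ ≤ δ := by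
      intro v' hv' y' hy'
      exact hull_le v' δ (S j) (fun y'' hy'' => hij i1 j (le_of_eq hi1v.symm) (by omega) hne1j v' hv' y'' hy'') y' hy'
    have step2 : ∀ y' ∈ D j, ∀ v' ∈ D i1, ⟪y', v'⟫_ℝ ≤ δ := by
      intro y' hy' v' hv'
      refine hull_le y' δ (S i1) (fun v'' hv'' => ?_) v' hv'
      rw [real_inner_comm]; exact step1 v'' hv'' y' hy'
    rw [real_inner_comm]; exact step2 y hy v hv
  obtain ⟨u₀, hu₀⟩ := hne 0
  have hu₀n : ‖u₀‖ ≤ 1 := hball 0 u₀ hu₀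
  obtain ⟨v, hv⟩ := hne i1
  have hvD : v ∈ D i1 := subset_convexHull ℝ _ hv
  have hvn : ‖v‖ ≤ 1 := hball i1 v hv
  -- the cone generated by the D i, i ≥ 2
  set I : Finset (Fin (k+1)) := Finset.univ.filter (fun i => 2 ≤ (i:ℕ)) with hI
  set C0 : Set (EuclideanSpace ℝ (Fin n)) :=
    {q | ∃ t : Fin (k+1) → ℝ, ∃ z : Fin (k+1) → EuclideanSpace ℝ (Fin n),
      (∀ i, 0 ≤ t i) ∧ (∀ i, z i ∈ D i) ∧ q = ∑ i ∈ I, t i • z i} with hC0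
  choose zd hzd using hDne
  have C0_zero : (0 : EuclideanSpace ℝ (Fin n)) ∈ C0 :=
    ⟨0, zd, fun i => le_rfl, hzd, by simp⟩
  have C0_add : ∀ a ∈ C0, ∀ b ∈ C0, a + b ∈ C0 := by
    rintro a ⟨t, z, ht, hz, rfl⟩ b ⟨t', z', ht', hz', rfl⟩
    have h : ∀ i, ∃ (s : ℝ) (w : EuclideanSpace ℝ (Fin n)), 0 ≤ s ∧ w ∈ D i ∧ t i • z i + t' i • z' i = s • w :=
      fun i => cone_add (hDconv i) (hz i) (hz' i) (ht i) (ht' i)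
    choose s w hs hw heq using h
    exact ⟨s, w, hs, hw, by rw [← Finset.sum_add_distrib]; exact Finset.sum_congr rfl fun i _ => heq i⟩
  have C0_smul : ∀ (r : ℝ), 0 ≤ r → ∀ a ∈ C0, r • a ∈ C0 := by
    rintro r hr a ⟨t, z, ht, hz, rfl⟩
    refine ⟨fun i => r * t i, z, fun i => mul_nonneg hr (ht i), hz, ?_⟩
    rw [Finset.smul_sum]
    exact Finset.sum_congr rfl fun i _ => by dsimp only; rw [smul_smul]
  have C0_gen : ∀ i ∈ I, ∀ y ∈ D i, y ∈ C0 := by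
    intro i hi y hy
    refine ⟨fun j => if j = i then 1 else 0, Function.update zd i y, ?_, ?_, ?_⟩
    · intro j; dsimp only; split <;> norm_num
    · intro j
      rcases eq_or_ne j i with rfl | hne'
      · simpa using hy
      · rw [Function.update_of_ne hne']; exact hzd j
    · rw [Finset.sum_eq_single_of_mem i hi (fun j _ hji => by simp [hji])]
      simp
  have C0_convex : Convex ℝ C0 := by
    intro a ha b hb s t hs ht _
    exact C0_add _ (C0_smul s hs a ha) _ (C0_smul t ht b hb)
  -- key estimates on the cone
  have C0_mass : ∀ q ∈ C0, ε * ⟪v, q⟫_ℝ ≤ δ * ‖q‖ := by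
    rintro q ⟨t, z, ht, hz, rfl⟩
    set T : ℝ := ∑ i ∈ I, t i with hT
    have hT0 : 0 ≤ T := Finset.sum_nonneg fun i _ => ht i
    have h1 : ⟪v, ∑ i ∈ I, t i • z i⟫_ℝ ≤ δ * T := by
      rw [inner_sum, hT, Finset.mul_sum]
      refine Finset.sum_le_sum fun i hi => ?_
      rw [real_inner_smul_right]
      have hi2 : 2 ≤ (i:ℕ) := by
        rw [hI] at hi; simpa using hi
      have := hDij1 i hi2 v hvD (z i) (hz i)
      calc t i * ⟪v, z i⟫_ℝ ≤ t i * δ := mul_le_mul_of_nonneg_left this (ht i)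
        _ = δ * t i := mul_comm _ _
    have h2 : ε * T ≤ ‖∑ i ∈ I, t i • z i‖ := by
      have hup : ⟪u₀, ∑ i ∈ I, t i • z i⟫_ℝ ≤ -(ε * T) := by
        rw [inner_sum]
        calc (∑ i ∈ I, ⟪u₀, t i • z i⟫_ℝ) ≤ ∑ i ∈ I, t i * (-ε) := by
              refine Finset.sum_le_sum fun i hi => ?_
              rw [real_inner_smul_right]
              have hi2 : 2 ≤ (i:ℕ) := by rw [hI] at hi; simpa using hi
              exact mul_le_mul_of_nonneg_left (hD0 i (by omega) u₀ hu₀ (z i) (hz i)) (ht i)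
          _ = -(ε * T) := by rw [hT, ← Finset.sum_mul]; ring
      have habs : |⟪u₀, ∑ i ∈ I, t i • z i⟫_ℝ| ≤ ‖u₀‖ * ‖∑ i ∈ I, t i • z i‖ :=
        abs_real_inner_le_norm _ _
      have hnn : (0:ℝ) ≤ ‖∑ i ∈ I, t i • z i‖ := norm_nonneg _
      nlinarith [abs_nonneg (⟪u₀, ∑ i ∈ I, t i • z i⟫_ℝ), neg_abs_le (⟪u₀, ∑ i ∈ I, t i • z i⟫_ℝ),
        mul_nonneg (sub_nonneg.2 hu₀n) hnn]
    calc ε * ⟪v, ∑ i ∈ I, t i • z i⟫_ℝ ≤ ε * (δ * T) := mul_le_mul_of_nonneg_left h1 hε0.le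
      _ = δ * (ε * T) := by ring
      _ ≤ δ * ‖∑ i ∈ I, t i • z i‖ := mul_le_mul_of_nonneg_left h2 hδpos.le
  set C : Set (EuclideanSpace ℝ (Fin n)) := closure C0 with hC
  have hCconv : Convex ℝ C := C0_convex.closure
  have hCne : C.Nonempty := ⟨0, subset_closure C0_zero⟩
  have hCcomplete : IsComplete C := isClosed_closure.isComplete
  obtain ⟨p, hpC, hpmin⟩ := exists_norm_eq_iInf_of_complete_convex hCne hCcomplete hCconv v
  have hchar : ∀ w ∈ C, ⟪v - p, w - p⟫_ℝ ≤ 0 :=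
    (norm_eq_iInf_iff_real_inner_le_zero hCconv hpC).1 hpmin
  have hmap : ∀ (g : EuclideanSpace ℝ (Fin n) → EuclideanSpace ℝ (Fin n)), Continuous g →
      (∀ q ∈ C0, g q ∈ C0) → ∀ a ∈ C, g a ∈ C := by
    intro g hg hmem a ha
    have h1 : g a ∈ closure (g '' C0) :=
      image_closure_subset_closure_image hg ⟨a, ha, rfl⟩
    refine closure_mono ?_ h1
    rintro _ ⟨q, hq, rfl⟩; exact hmem q hq
  have hp0 : ⟪v - p, p⟫_ℝ = 0 := by
    have h1 := hchar 0 (subset_closure C0_zero)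
    have h2 : p + p ∈ C := hmap (fun q => q + q) (continuous_id.add continuous_id)
      (fun q hq => C0_add q hq q hq) p hpC
    have h3 := hchar _ h2
    rw [add_sub_cancel_right] at h3
    rw [zero_sub, inner_neg_right] at h1
    linarith
  have hkeyp : ε * ⟪v, p⟫_ℝ ≤ δ * ‖p‖ := by
    have hcl : C ⊆ {q | ε * ⟪v, q⟫_ℝ ≤ δ * ‖q‖} := by
      refine closure_minimal C0_mass (isClosed_le ?_ ?_)
      · exact continuous_const.mul (continuous_const.inner continuous_id)
      · exact continuous_const.mul continuous_norm
    exact hcl hpC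
  have hpvp : ⟪v, p⟫_ℝ = ‖p‖^2 := by
    have := hp0
    rw [inner_sub_left, real_inner_self_eq_norm_sq] at this
    linarith
  have hpnorm : ‖p‖ ≤ ε/8 := by
    rw [hpvp] at hkeyp
    have hn0 : (0:ℝ) ≤ ‖p‖ := norm_nonneg p
    rcases eq_or_lt_of_le hn0 with h | h
    · rw [← h]; positivity
    · have hδ' : δ ≤ ε^2/8 := by
        rw [hδdef, div_le_div_iff₀ (by linarith) (by norm_num)]
        nlinarith
      have hfin : ε * ‖p‖^2 ≤ ε^2/8 * ‖p‖ := le_trans hkeyp (mul_le_mul_of_nonneg_right hδ' hn0)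
      nlinarith [mul_pos hε0 h]
  set xh : EuclideanSpace ℝ (Fin n) := v - p with hxh
  have hxu : ∀ u ∈ S 0, ⟪u, xh⟫_ℝ ≤ -(3/4*ε) := by
    intro u hu
    have h1 : ⟪u, v⟫_ℝ ≤ -ε := hD0 i1 (le_of_eq hi1v.symm) u hu v hvD
    have h2 : |⟪u, p⟫_ℝ| ≤ ‖u‖ * ‖p‖ := abs_real_inner_le_norm u p
    have hun : ‖u‖ ≤ 1 := hball 0 u hu
    have h3 : ‖u‖ * ‖p‖ ≤ ε/8 := by
      nlinarith [norm_nonneg u, norm_nonneg p, mul_nonneg (sub_nonneg.2 hun) (norm_nonneg p)]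
    rw [hxh, inner_sub_right]
    have h4 := neg_abs_le (⟪u, p⟫_ℝ)
    linarith [h2.trans h3]
  have hxy : ∀ i : Fin (k+1), 2 ≤ (i:ℕ) → ∀ y ∈ S i, ⟪y, xh⟫_ℝ ≤ 0 := by
    intro i hi y hy
    have hiI : i ∈ I := by rw [hI]; simp [hi]
    have hyD : y ∈ D i := subset_convexHull ℝ _ hy
    have h2 : p + y ∈ C := hmap (fun q => q + y) (continuous_id.add continuous_const)
      (fun q hq => C0_add q hq y (C0_gen i hiI y hyD)) p hpC
    have h3 := hchar _ h2
    rw [add_sub_cancel_left] at h3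
    rw [real_inner_comm]; exact h3
  have hxhne : xh ≠ 0 := by
    intro h
    have := hxu u₀ hu₀
    rw [h, inner_zero_right] at this
    linarith
  have hxhpos : 0 < ‖xh‖ := norm_pos_iff.2 hxhne
  have hxhle : ‖xh‖ ≤ 1 := by
    have hbdd : BddBelow (Set.range fun w : C => ‖v - (w:EuclideanSpace ℝ (Fin n))‖) := by
      refine ⟨0, ?_⟩
      rintro _ ⟨w, rfl⟩; exact norm_nonneg _
    have h1 : (⨅ w : C, ‖v - (w:EuclideanSpace ℝ (Fin n))‖) ≤ ‖v - 0‖ :=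
      ciInf_le hbdd (⟨0, subset_closure C0_zero⟩ : C)
    rw [sub_zero] at h1
    calc ‖xh‖ = ⨅ w : C, ‖v - (w:EuclideanSpace ℝ (Fin n))‖ := hpmin
      _ ≤ ‖v‖ := h1
      _ ≤ 1 := hvn
  refine ⟨‖xh‖⁻¹ • xh, ?_, ?_, ?_⟩
  · rw [norm_smul, norm_inv, norm_norm, inv_mul_cancel₀ hxhpos.ne']
  · intro u hu
    rw [real_inner_smul_right]
    have h1 : 1 ≤ ‖xh‖⁻¹ := one_le_inv₀ hxhpos |>.2 hxhle
    have h2 := hxu u hu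
    nlinarith [mul_nonneg (sub_nonneg.2 h1) (neg_nonneg.2 (le_trans h2 (by linarith)))]
  · intro i hi y hy
    rw [real_inner_smul_right]
    have h2 := hxy i hi y hy
    have h3 : (0:ℝ) ≤ ‖xh‖⁻¹ := by positivity
    nlinarith [mul_nonneg h3 (neg_nonneg.2 h2)]

end Stmt8Aux

/-- The nonemptiness claim `X ≠ ∅` in the proof of Lemma 5.2(1) (round-sphere case). Here
`f 0, f 1, …, f k` play the roles of `f₁, f₂, …, f_{k+1}`. -/
theorem stmt_8 (n : ℕ) (hn : 2 ≤ n) (ε : ℝ) (hε : ε ∈ Set.Ioo (0 : ℝ) 1) :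
    ∃ δ > (0 : ℝ), ∃ c > (0 : ℝ), ∀ k : ℕ, 1 ≤ k → k ≤ n →
      ∀ f : Fin (k + 1) → DERData n,
        (∀ i : Fin (k + 1), 1 ≤ (i : ℕ) → (f 0).sprod (f i) < -ε) →
        (∀ i j : Fin (k + 1), 1 ≤ (i : ℕ) → 1 ≤ (j : ℕ) → i ≠ j → (f i).sprod (f j) < δ) →
        {x : EuclideanSpace ℝ (Fin n) | ‖x‖ = 1 ∧ c ≤ (f 0).toFun x ∧
          ∀ i : Fin (k + 1), 2 ≤ (i : ℕ) → 0 ≤ (f i).toFun x}.Nonempty := by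

  obtain ⟨hε0, hε1⟩ := hε
  have hN : (2:ℝ) ≤ (n:ℝ) := by exact_mod_cast hn
  have h4n : (0:ℝ) < 4*n := by linarith
  refine ⟨ε^2/(4*n), div_pos (by positivity) h4n, ε/2, by positivity, ?_⟩
  intro k hk1 hkn f hf0 hfij
  obtain ⟨x, hx1, hxu, hxy⟩ := Stmt8Aux.geom k hn hk1 ε hε0 (fun i => Stmt8Aux.K (f i))
    (fun i => Stmt8Aux.K_nonempty (f i))
    (fun i y hy => Stmt8Aux.norm_le_one_of_mem_K (f i) hy)
    (fun i hi u hu y hy =>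
      le_trans (Stmt8Aux.inner_le_sprod (f 0) (f i) hu hy) (le_of_lt (hf0 i hi)))
    (fun i j hi hj hij y hy y' hy' =>
      le_trans (Stmt8Aux.inner_le_sprod (f i) (f j) hy hy') (le_of_lt (hfij i j hi hj hij)))
  refine ⟨x, hx1, ?_, ?_⟩
  · obtain ⟨u, huK, hrep⟩ := Stmt8Aux.exists_rep (f 0) x
    rw [hrep]
    have := hxu u huK
    linarith
  · intro i hi
    obtain ⟨y, hyK, hrep⟩ := Stmt8Aux.exists_rep (f i) x
    rw [hrep]
    have := hxy i hi y hyK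
    linarith

end
end

section
/- For every integer n ≥ 1 and every ε ∈ (0,1) there exists δ > 0 (depending only on n and ε) such that there do not exist unit vectors a₁, …, a_{n+2} in EuclideanSpace ℝ (Fin n) with ⟨a₁, a_i⟩ < −ε for all i with 3 ≤ i ≤ n+2 and ⟨a_i, a_j⟩ < δ for all i ≠ j. -/
/-!
Write `e = a₁`, `f = a₂` and `b k` for the remaining `n` vectors. For `δ = ε² / 64` the `n + 1`
vectors `e` and `b k + (ε/2) e - 4δ f` have pairwise negative inner products and all make an acute
angle with `δ e - f`. Such a family is linearly independent, which is impossible in `ℝⁿ`.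
-/

open scoped InnerProductSpace
open Module

variable {E : Type*} [NormedAddCommGroup E] [InnerProductSpace ℝ E]

theorem linearIndependent_of_pairwise_real_inner_nonpos {ι : Type*} {v : ι → E} (w : E)
    (hw : ∀ i, 0 < ⟪w, v i⟫_ℝ) (hv : Pairwise fun i j => ⟪v i, v j⟫_ℝ ≤ 0) :
    LinearIndependent ℝ v :=
  LinearMap.BilinForm.linearIndependent_of_pairwise_le_zero (innerₗ E)
    (fun x hx => by simpa using real_inner_self_pos.2 hx) (innerₗ E w) v hw hv

theorem card_lt_finrank_of_nearly_obtuse [FiniteDimensional ℝ E] {ι : Type*} [Fintype ι]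
    {ε δ : ℝ} (hε : 0 < ε) (hδ : 0 < δ) (hδε : δ ≤ ε ^ 2 / 64)
    {e f : E} {b : ι → E} (he : ‖e‖ = 1) (hf : ‖f‖ = 1) (hb : ∀ k, ‖b k‖ = 1)
    (hef : ⟪e, f⟫_ℝ < δ) (heb : ∀ k, ⟪e, b k⟫_ℝ < -ε) (hfb : ∀ k, ⟪f, b k⟫_ℝ < δ)
    (hbb : Pairwise fun k l => ⟪b k, b l⟫_ℝ < δ) :
    Fintype.card ι < finrank ℝ E := by
  set v : ι → E := fun k => b k + (ε / 2) • e - (4 * δ) • f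
  have hee : ⟪e, e⟫_ℝ = 1 := by simp [he]
  have hff : ⟪f, f⟫_ℝ = 1 := by simp [hf]
  have hef_ge := neg_one_le_real_inner_of_norm_eq_one he hf
  have heb_ge k := neg_one_le_real_inner_of_norm_eq_one he (hb k)
  have hfb_ge k := neg_one_le_real_inner_of_norm_eq_one hf (hb k)
  have hev k : ⟪e, v k⟫_ℝ < 0 := by
    simp only [v, inner_add_right, inner_sub_right, real_inner_smul_right, hee]
    nlinarith [heb k, heb_ge k]
  have hvv k l (hkl : k ≠ l) : ⟪v k, v l⟫_ℝ < 0 := by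
    simp only [v, inner_add_right, inner_sub_right, inner_add_left, inner_sub_left,
      real_inner_smul_right, real_inner_smul_left, hee, hff, real_inner_comm e (b _),
      real_inner_comm f (b _), real_inner_comm e f]
    have hε1 : ε < 1 := by linarith [heb k, heb_ge k]
    nlinarith [mul_lt_mul_of_pos_left (heb k) hε, mul_lt_mul_of_pos_left (heb l) hε,
      mul_le_mul_of_nonneg_left (hfb_ge k) hδ.le, mul_le_mul_of_nonneg_left (hfb_ge l) hδ.le,
      mul_le_mul_of_nonneg_left hef_ge (mul_pos hε hδ).le, mul_lt_mul_of_pos_right hε1 hδ,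
      hbb hkl]
  have hwv k : 0 < ⟪δ • e - f, v k⟫_ℝ := by
    simp only [v, inner_add_right, inner_sub_right, inner_sub_left,
      real_inner_smul_right, real_inner_smul_left, hee, hff, real_inner_comm e f]
    have hδ1 : δ < 1 / 2 := by nlinarith [heb k, heb_ge k]
    nlinarith [mul_le_mul_of_nonneg_left (heb_ge k) hδ.le, mul_lt_mul_of_pos_left hef hε,
      mul_lt_mul_of_pos_left hef (mul_pos hδ hδ), mul_lt_mul_of_pos_left hδ1 hδ, hfb k]
  have hwe : 0 < ⟪δ • e - f, e⟫_ℝ := by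
    rw [inner_sub_left, real_inner_smul_left, hee, real_inner_comm]
    linarith
  have hindep : LinearIndependent ℝ fun o : Option ι => o.elim e v := by
    refine linearIndependent_of_pairwise_real_inner_nonpos (δ • e - f) ?_ ?_
    · rintro (_ | k)
      exacts [hwe, hwv k]
    · rintro (_ | k) (_ | l) hkl
      · exact absurd rfl hkl
      · exact (hev l).le
      · exact (real_inner_comm e (v k) ▸ hev k).le
      · exact (hvv k l (Option.some_injective _ |>.ne_iff.1 hkl)).le
  simpa using hindep.fintype_card_le_finrank

theorem stmt_9_general (n : ℕ) (ε : ℝ) (hε : ε ∈ Set.Ioo (0 : ℝ) 1) :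
    ∃ δ > (0 : ℝ), ¬ ∃ a : Fin (n + 2) → EuclideanSpace ℝ (Fin n),
      (∀ i, ‖a i‖ = 1) ∧
      (∀ i : Fin (n + 2), 2 ≤ (i : ℕ) → ⟪a 0, a i⟫_ℝ < -ε) ∧
      (∀ i j : Fin (n + 2), i ≠ j → ⟪a i, a j⟫_ℝ < δ) := by
  obtain ⟨hε₀, -⟩ := hε
  have hδ : 0 < ε ^ 2 / 64 := by positivity
  refine ⟨ε ^ 2 / 64, hδ, ?_⟩
  rintro ⟨a, ha, ha0, haa⟩
  have := card_lt_finrank_of_nearly_obtuse hε₀ hδ le_rfl (ha 0) (ha 1)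
    (b := fun k : Fin n => a (k.addNat 2)) (fun k => ha _) (haa 0 1 (by simp))
    (fun k => ha0 _ (by simp)) (fun k => haa 1 _ (by simp [Fin.ext_iff]))
    (fun k l hkl => haa _ _ (by simpa [Fin.ext_iff] using hkl))
  simp at this

/-- The point-mass case of Lemma 5.1: for `n ≥ 1` and `ε ∈ (0,1)` there is `δ > 0` such that
there do not exist unit vectors `a₁, …, a_{n+2}` in `ℝⁿ` with `⟪a₁, a_i⟫ < -ε` for `i ≥ 3`
and `⟪a_i, a_j⟫ < δ` for all `i ≠ j`. -/
theorem stmt_9 (n : ℕ) (hn : 1 ≤ n) (ε : ℝ) (hε : ε ∈ Set.Ioo (0 : ℝ) 1) :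
    ∃ δ > (0 : ℝ), ¬ ∃ a : Fin (n + 2) → EuclideanSpace ℝ (Fin n),
      (∀ i, ‖a i‖ = 1) ∧
      (∀ i : Fin (n + 2), 2 ≤ (i : ℕ) → ⟪a 0, a i⟫_ℝ < -ε) ∧
      (∀ i j : Fin (n + 2), i ≠ j → ⟪a i, a j⟫_ℝ < δ) :=
  stmt_9_general n ε hε
end

section
/- For every integer n ≥ 1 and every ε ∈ (0,1) there exist δ > 0 and c > 0 (depending only on n and ε) with the following property: for every k ≤ n, if a₁, …, a_{k+1} are unit vectors in EuclideanSpace ℝ (Fin n) with ⟨a₁, a_i⟩ < −ε for all 2 ≤ i ≤ k+1 and ⟨a_i, a_j⟩ < δ for all 2 ≤ i ≠ j ≤ k+1, then there exists a unit vector ξ such that ⟨a₁, ξ⟩ < −c, ⟨a₂, ξ⟩ > c, and ⟨a_i, ξ⟩ = 0 for all 3 ≤ i ≤ k+1. -/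
/-! Let `W` be the span of `a 2, …, a k`, let `b` be the component of `a 1` orthogonal to `W`, and
take `ξ = b / ‖b‖`. Split the projection `a 1 - b = P - M`, where `P` and `M` are the nonnegative
combinations of the `a i` given by the positive and negative parts of its coefficients, with
coefficient sums `s` and `t`. All `a i` lie in the cap `⟪-a 0, ·⟫ > ε`, so `ε s ≤ ‖P‖` and
`ε t ≤ ‖M‖`; almost-orthogonality, together with `⟪a i, P - M⟫ = ⟪a i, a 1⟫`, gives
`‖P‖² ≤ δ s (1 + t)` and `‖M‖² ≤ t (1 + δ s)`. For `δ ≤ ε⁵/8` this forces `s ≤ ε/2`, so projecting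
costs at most `ε/2` of `⟪-a 0, a 1⟫ > ε`: hence `⟪-a 0, b⟫ > ε/2` and also `‖b‖ > ε/2`. -/

open scoped InnerProductSpace

variable {E ι : Type*} [NormedAddCommGroup E] [InnerProductSpace ℝ E] [Fintype ι]

section NonnegCombination

variable {v : ι → E} {p : ι → ℝ}

lemma inner_sum_smul_le (hp : ∀ i, 0 ≤ p i) {y : E} {C : ℝ}
    (h : ∀ i, 0 < p i → ⟪v i, y⟫_ℝ ≤ C) : ⟪∑ i, p i • v i, y⟫_ℝ ≤ C * ∑ i, p i := by
  simp only [sum_inner, real_inner_smul_left, Finset.mul_sum]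
  refine Finset.sum_le_sum fun i _ => ?_
  rcases (hp i).eq_or_lt with hi | hi
  · simp [← hi]
  · rw [mul_comm C]
    exact mul_le_mul_of_nonneg_left (h i hi) hi.le

lemma le_inner_sum_smul (hp : ∀ i, 0 ≤ p i) {y : E} {C : ℝ}
    (h : ∀ i, C ≤ ⟪v i, y⟫_ℝ) : C * ∑ i, p i ≤ ⟪∑ i, p i • v i, y⟫_ℝ := by
  have := inner_sum_smul_le hp (y := -y) (C := -C) fun i _ => by
    rw [inner_neg_right]; linarith [h i]
  rw [inner_neg_right] at this
  linarith

lemma mul_sum_le_norm_sum_smul (hp : ∀ i, 0 ≤ p i) {u : E} (hu : ‖u‖ ≤ 1) {ε : ℝ}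
    (huv : ∀ i, ε ≤ ⟪v i, u⟫_ℝ) : ε * ∑ i, p i ≤ ‖∑ i, p i • v i‖ :=
  calc ε * ∑ i, p i ≤ ⟪∑ i, p i • v i, u⟫_ℝ := le_inner_sum_smul hp huv
    _ ≤ ‖∑ i, p i • v i‖ * ‖u‖ := real_inner_le_norm _ _
    _ ≤ ‖∑ i, p i • v i‖ := mul_le_of_le_one_right (norm_nonneg _) hu

end NonnegCombination

lemma inner_sum_posPart_smul_sum_negPart_smul_le {v : ι → E} {δ : ℝ}
    (hvv : Pairwise fun i j => ⟪v i, v j⟫_ℝ ≤ δ) (c : ι → ℝ) :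
    ⟪∑ i, (c i)⁺ • v i, ∑ j, (c j)⁻ • v j⟫_ℝ ≤ δ * (∑ i, (c i)⁺) * ∑ j, (c j)⁻ := by
  rw [real_inner_comm]
  refine inner_sum_smul_le (v := v) (fun j => negPart_nonneg (c j)) fun j hj => ?_
  rw [real_inner_comm]
  refine inner_sum_smul_le (v := v) (fun i => posPart_nonneg (c i)) fun i hi => ?_
  refine hvv fun hij => ?_
  subst hij
  exact (negPart_pos_iff.1 hj).not_gt (posPart_pos_iff.1 hi)

lemma le_half_of_sq_le {ε δ s t : ℝ} (hε : ε ∈ Set.Ioo 0 1) (hδ0 : 0 ≤ δ) (hδ : δ ≤ ε ^ 5 / 8)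
    (hs : 0 ≤ s) (ht : 0 ≤ t) (hs₂ : (ε * s) ^ 2 ≤ δ * s * (1 + t))
    (ht₂ : (ε * t) ^ 2 ≤ t * (1 + δ * s)) : s ≤ ε / 2 := by
  obtain ⟨hε0, hε1⟩ := hε
  rcases hs.eq_or_lt with rfl | hs
  · positivity
  have hs₁ : ε ^ 2 * s ≤ δ * (1 + t) := by nlinarith
  have ht₁ : ε ^ 2 * t ≤ 1 + δ * s := by
    rcases ht.eq_or_lt with rfl | ht <;> nlinarith
  have hδsq : δ ^ 2 ≤ ε ^ 4 / 2 := by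
    have : ε ^ 5 ≤ ε ^ 2 := pow_le_pow_of_le_one hε0.le hε1.le (by norm_num)
    nlinarith
  have hε2 : ε ^ 2 ≤ 1 := pow_le_one₀ hε0.le hε1.le
  have : ε ^ 4 * s ≤ δ * (1 + ε ^ 2) + δ ^ 2 * s := by nlinarith
  have : ε ^ 4 * s ≤ ε ^ 4 * (ε / 2) := by nlinarith
  exact le_of_mul_le_mul_left this (by positivity)

section ObtuseFamily

variable {ε δ : ℝ} {u x : E} {v : ι → E}

lemma inner_sum_smul_le_half_of_inner_eq (hε : ε ∈ Set.Ioo 0 1) (hδ0 : 0 ≤ δ)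
    (hδ : δ ≤ ε ^ 5 / 8) (hu : ‖u‖ ≤ 1) (hx : ‖x‖ ≤ 1) (hv : ∀ i, ‖v i‖ ≤ 1)
    (huv : ∀ i, ε ≤ ⟪v i, u⟫_ℝ) (hxv : ∀ i, ⟪v i, x⟫_ℝ ≤ δ)
    (hvv : Pairwise fun i j => ⟪v i, v j⟫_ℝ ≤ δ) {c : ι → ℝ}
    (hc : ∀ i, ⟪v i, ∑ j, c j • v j⟫_ℝ = ⟪v i, x⟫_ℝ) :
    ⟪∑ i, c i • v i, u⟫_ℝ ≤ ε / 2 := by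
  set P := ∑ i, (c i)⁺ • v i
  set M := ∑ i, (c i)⁻ • v i
  set s := ∑ i, (c i)⁺
  set t := ∑ i, (c i)⁻
  have hs : 0 ≤ s := Finset.sum_nonneg fun i _ => posPart_nonneg (c i)
  have ht : 0 ≤ t := Finset.sum_nonneg fun i _ => negPart_nonneg (c i)
  have hPM : ∑ i, c i • v i = P - M := by
    simp only [P, M, ← Finset.sum_sub_distrib, ← sub_smul, posPart_sub_negPart]
  rw [hPM] at hc
  have hvx : ∀ i, -1 ≤ ⟪v i, x⟫_ℝ := fun i => by
    have := (abs_real_inner_le_norm (v i) x).trans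
      (mul_le_one₀ (hv i) (norm_nonneg x) hx)
    exact (abs_le.1 this).1
  have hP : ‖P‖ ^ 2 ≤ δ * s * (1 + t) := by
    have h₁ : ⟪P, P - M⟫_ℝ ≤ δ * s :=
      inner_sum_smul_le (fun i => posPart_nonneg (c i)) fun i _ => (hc i).trans_le (hxv i)
    have h₂ := inner_sum_posPart_smul_sum_negPart_smul_le hvv c
    rw [inner_sub_right, real_inner_self_eq_norm_sq] at h₁
    nlinarith
  have hM : ‖M‖ ^ 2 ≤ t * (1 + δ * s) := by
    have h₁ : -1 * t ≤ ⟪M, P - M⟫_ℝ :=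
      le_inner_sum_smul (fun i => negPart_nonneg (c i)) fun i => (hc i).symm ▸ hvx i
    have h₂ := inner_sum_posPart_smul_sum_negPart_smul_le hvv c
    rw [inner_sub_right, real_inner_self_eq_norm_sq, real_inner_comm] at h₁
    nlinarith
  have hsP := mul_sum_le_norm_sum_smul (fun i => posPart_nonneg (c i)) hu huv
  have htM := mul_sum_le_norm_sum_smul (fun i => negPart_nonneg (c i)) hu huv
  have hs_le : s ≤ ε / 2 := le_half_of_sq_le hε hδ0 hδ hs ht
    ((pow_le_pow_left₀ (mul_nonneg hε.1.le hs) hsP 2).trans hP)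
    ((pow_le_pow_left₀ (mul_nonneg hε.1.le ht) htM 2).trans hM)
  have hPu : ⟪P, u⟫_ℝ ≤ 1 * s := inner_sum_smul_le (fun i => posPart_nonneg (c i)) fun i _ =>
    (real_inner_le_norm _ _).trans (mul_le_one₀ (hv i) (norm_nonneg u) hu)
  have hMu : ε * t ≤ ⟪M, u⟫_ℝ := le_inner_sum_smul (fun i => negPart_nonneg (c i)) huv
  rw [hPM, inner_sub_left]
  nlinarith [hε.1]

theorem exists_norm_eq_one_inner_gt_and_orthogonal (hε : ε ∈ Set.Ioo 0 1) (hδ0 : 0 ≤ δ)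
    (hδ : δ ≤ ε ^ 5 / 8) (hu : ‖u‖ ≤ 1) (hx : ‖x‖ ≤ 1) (hv : ∀ i, ‖v i‖ ≤ 1)
    (hux : ε < ⟪u, x⟫_ℝ) (huv : ∀ i, ε ≤ ⟪v i, u⟫_ℝ) (hxv : ∀ i, ⟪v i, x⟫_ℝ ≤ δ)
    (hvv : Pairwise fun i j => ⟪v i, v j⟫_ℝ ≤ δ) :
    ∃ ξ : E, ‖ξ‖ = 1 ∧ ε / 2 < ⟪u, ξ⟫_ℝ ∧ ε / 2 < ⟪x, ξ⟫_ℝ ∧ ∀ i, ⟪v i, ξ⟫_ℝ = 0 := by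
  set W := Submodule.span ℝ (Set.range v)
  have : FiniteDimensional ℝ W := FiniteDimensional.span_of_finite ℝ (Set.finite_range v)
  set w := W.starProjection x
  set b := x - w
  have hvb : ∀ i, ⟪v i, b⟫_ℝ = 0 := fun i => by
    rw [real_inner_comm]
    exact W.starProjection_inner_eq_zero x (v i) (Submodule.subset_span ⟨i, rfl⟩)
  obtain ⟨c, hc⟩ : ∃ c : ι → ℝ, ∑ i, c i • v i = w :=
    (Submodule.mem_span_range_iff_exists_fun ℝ).1 (W.starProjection_apply_mem x)
  have hwu : ⟪w, u⟫_ℝ ≤ ε / 2 := by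
    rw [← hc]
    refine inner_sum_smul_le_half_of_inner_eq hε hδ0 hδ hu hx hv huv hxv hvv fun i => ?_
    have := hvb i
    rw [inner_sub_right, sub_eq_zero] at this
    rw [hc, this]
  have hub : ε / 2 < ⟪u, b⟫_ℝ := by
    rw [inner_sub_right, real_inner_comm w u]
    linarith
  have hxb : ⟪x, b⟫_ℝ = ‖b‖ ^ 2 := by
    have hwb : ⟪w, b⟫_ℝ = 0 := by
      rw [real_inner_comm]; exact W.starProjection_inner_eq_zero x w (W.starProjection_apply_mem x)
    rw [← real_inner_self_eq_norm_sq, inner_sub_left, hwb, sub_zero]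
  have hb_pos : ε / 2 < ‖b‖ := hub.trans_le <|
    (real_inner_le_norm u b).trans (mul_le_of_le_one_left (norm_nonneg b) hu)
  have hb_le : ‖b‖ ≤ 1 := by
    have := (real_inner_le_norm x b).trans (mul_le_of_le_one_left (norm_nonneg b) hx)
    nlinarith
  have hb0 : b ≠ 0 := norm_pos_iff.1 (by linarith [hε.1])
  refine ⟨‖b‖⁻¹ • b, norm_smul_inv_norm hb0, ?_, ?_, fun i => by
    rw [real_inner_smul_right, hvb i, mul_zero]⟩
  · rw [real_inner_smul_right, inv_mul_eq_div, lt_div_iff₀ (by linarith [hε.1])]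
    nlinarith [hε.1]
  · rw [real_inner_smul_right, hxb, inv_mul_eq_div, pow_two, mul_self_div_self]
    exact hb_pos

end ObtuseFamily

/-- Here `a 0, a 1, …, a k` play the roles of `a₁, a₂, …, a_{k+1}`. -/
theorem stmt_10_general (n : ℕ) (ε : ℝ) (hε : ε ∈ Set.Ioo (0 : ℝ) 1) :
    ∃ δ > (0 : ℝ), ∃ c > (0 : ℝ), ∀ k : ℕ, 1 ≤ k → k ≤ n →
      ∀ a : Fin (k + 1) → EuclideanSpace ℝ (Fin n),
        (∀ i, ‖a i‖ = 1) →
        (∀ i : Fin (k + 1), 1 ≤ (i : ℕ) → ⟪a 0, a i⟫_ℝ < -ε) →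
        (∀ i j : Fin (k + 1), 1 ≤ (i : ℕ) → 1 ≤ (j : ℕ) → i ≠ j → ⟪a i, a j⟫_ℝ < δ) →
        ∃ ξ : EuclideanSpace ℝ (Fin n), ‖ξ‖ = 1 ∧
          ⟪a 0, ξ⟫_ℝ < -c ∧ c < ⟪a 1, ξ⟫_ℝ ∧
          ∀ i : Fin (k + 1), 2 ≤ (i : ℕ) → ⟪a i, ξ⟫_ℝ = 0 := by
  have hε0 := hε.1
  refine ⟨ε ^ 5 / 8, by positivity, ε / 2, by positivity, fun k hk _ a ha h0 hpair => ?_⟩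
  have h1 : ((1 : Fin (k + 1)) : ℕ) = 1 := by
    rw [Fin.val_one', Nat.mod_eq_of_lt (by omega)]
  let v : {i : Fin (k + 1) // 2 ≤ (i : ℕ)} → EuclideanSpace ℝ (Fin n) := fun i => a i
  obtain ⟨ξ, hξ, h0ξ, h1ξ, hvξ⟩ := exists_norm_eq_one_inner_gt_and_orthogonal (u := -a 0)
    (x := a 1) (v := v) hε (by positivity) le_rfl (by simp [ha]) (ha 1).le
    (fun i => (ha i).le)
    (by rw [inner_neg_left]; linarith [h0 1 h1.ge])
    (fun i => by
      change ε ≤ ⟪a i, -a 0⟫_ℝ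
      rw [inner_neg_right, real_inner_comm]
      linarith [h0 i (by omega)])
    (fun i => (hpair i 1 (by omega) h1.ge (fun h => by omega)).le)
    (fun i j hij => (hpair i j (by omega) (by omega) (fun h => hij (Subtype.ext h))).le)
  refine ⟨ξ, hξ, by rw [inner_neg_left] at h0ξ; linarith, h1ξ, fun i hi => hvξ ⟨i, hi⟩⟩

/-- The point-mass case of Lemma 5.2(1). Here `a 0, a 1, …, a k` play the roles of
`a₁, a₂, …, a_{k+1}`. -/
theorem stmt_10 (n : ℕ) (hn : 1 ≤ n) (ε : ℝ) (hε : ε ∈ Set.Ioo (0 : ℝ) 1) :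
    ∃ δ > (0 : ℝ), ∃ c > (0 : ℝ), ∀ k : ℕ, 1 ≤ k → k ≤ n →
      ∀ a : Fin (k + 1) → EuclideanSpace ℝ (Fin n),
        (∀ i, ‖a i‖ = 1) →
        (∀ i : Fin (k + 1), 1 ≤ (i : ℕ) → ⟪a 0, a i⟫_ℝ < -ε) →
        (∀ i j : Fin (k + 1), 1 ≤ (i : ℕ) → 1 ≤ (j : ℕ) → i ≠ j → ⟪a i, a j⟫_ℝ < δ) →
        ∃ ξ : EuclideanSpace ℝ (Fin n), ‖ξ‖ = 1 ∧
          ⟪a 0, ξ⟫_ℝ < -c ∧ c < ⟪a 1, ξ⟫_ℝ ∧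
          ∀ i : Fin (k + 1), 2 ≤ (i : ℕ) → ⟪a i, ξ⟫_ℝ = 0 :=
  stmt_10_general n ε hε
end
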